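/- arXiv:1806.02195 — 4 statements merged into one kernel-verified Lean document; each statement's English description precedes it below -/
import Mathlib

section
/- Let χ_0, …, χ_k ∈ ℤ^d (k ≥ 1) form a circuit, i.e., the family {χ_0, …, χ_k} is ℚ-linearly dependent but every proper subfamily is ℚ-linearly independent. Then there exist signs c_0, …, c_k ∈ {1, −1} such that ∑_{i=0}^k c_i · m(C∖{i}) · χ_i = 0 in ℤ^d, where C = {0, …, k} and for A ⊆ C, m(A) denotes the (finite) index of the subgroup of ℤ^d generated by {χ_i : i ∈ A} inside the subgroup (ℚ-span of {χ_i : i ∈ A}) ∩ ℤ^d. -/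
noncomputable section

/-- Coordinatewise inclusion of `ℤ^d` into `ℚ^d`. -/
def intCastHom (d : ℕ) : (Fin d → ℤ) →+ (Fin d → ℚ) :=
  (Int.castAddHom ℚ).compLeft (Fin d)

/-- The rational vector associated to an integer vector. -/
def Qv (d : ℕ) (v : Fin d → ℤ) : Fin d → ℚ := fun j => (v j : ℚ)

/-- The subgroup `Λ_A` of `ℤ^d` generated by the vectors `χ i`, `i ∈ A`. -/
def latSub (d : ℕ) (χ : ℕ → Fin d → ℤ) (A : Finset ℕ) : AddSubgroup (Fin d → ℤ) :=
  AddSubgroup.closure ((fun i => χ i) '' (A : Set ℕ))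

/-- The saturation `Λ^A = (ℚ-span of {χ i : i ∈ A}) ∩ ℤ^d`. -/
def satSub (d : ℕ) (χ : ℕ → Fin d → ℤ) (A : Finset ℕ) : AddSubgroup (Fin d → ℤ) :=
  ((Submodule.span ℚ ((fun i => Qv d (χ i)) '' (A : Set ℕ))).toAddSubgroup).comap
    (intCastHom d)

/-- The multiplicity `m(A) = [Λ^A : Λ_A]`. -/
def mult (d : ℕ) (χ : ℕ → Fin d → ℤ) (A : Finset ℕ) : ℕ :=
  (latSub d χ A).relIndex (satSub d χ A)

def fQ (d : ℕ) : (Fin d → ℤ) →ₗ[ℤ] (Fin d → ℚ) where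
  toFun := Qv d
  map_add' := by intro x y; funext j; simp [Qv]
  map_smul' := by intro c x; funext j; simp [Qv]

lemma fQ_inj (d : ℕ) : LinearMap.ker (fQ d) = ⊥ := by
  rw [LinearMap.ker_eq_bot]
  intro x y h
  funext j
  have := congrFun h j
  simpa [fQ, Qv] using this

lemma li_trans (d : ℕ) (χ : ℕ → Fin d → ℤ) (s : Finset ℕ) :
    LinearIndependent ℚ (fun a : (s : Finset ℕ) => Qv d (χ a)) ↔
    LinearIndependent ℤ (fun a : (s : Finset ℕ) => χ a) := by
  rw [← LinearIndependent.iff_fractionRing (R := ℤ) (K := ℚ)]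
  exact LinearMap.linearIndependent_iff (fQ d) (fQ_inj d)

lemma mem_latSub (d : ℕ) (χ : ℕ → Fin d → ℤ) (A : Finset ℕ) (x : Fin d → ℤ) :
    x ∈ latSub d χ A ↔ ∃ m : ℕ → ℤ, x = ∑ j ∈ A, m j • χ j := by
  constructor
  · intro hx
    rw [latSub, ← Submodule.span_int_eq_addSubgroupClosure, Submodule.mem_toAddSubgroup,
      Finsupp.mem_span_image_iff_linearCombination] at hx
    obtain ⟨l, hl, rfl⟩ := hx
    refine ⟨l, ?_⟩
    rw [Finsupp.linearCombination_apply, Finsupp.sum]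
    refine Finset.sum_subset ?_ ?_
    · exact_mod_cast (Finsupp.mem_supported ℤ l).mp hl
    · intro j _ hj
      rw [Finsupp.notMem_support_iff.mp hj, zero_smul]
  · rintro ⟨m, rfl⟩
    refine AddSubgroup.sum_mem _ fun j hj => AddSubgroup.zsmul_mem _ ?_ _
    exact AddSubgroup.subset_closure (Set.mem_image_of_mem _ (by exact_mod_cast hj))

lemma exists_rel (d k : ℕ) (χ : ℕ → Fin d → ℤ)
    (hdep : ¬ LinearIndependent ℚ
      (fun i : (Finset.range (k+1) : Finset ℕ) => Qv d (χ i))) :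
    ∃ a : ℕ → ℤ, (∑ i ∈ Finset.range (k+1), a i • χ i = 0) ∧
      ∃ i ∈ Finset.range (k+1), a i ≠ 0 := by
  classical
  rw [li_trans, Fintype.not_linearIndependent_iff] at hdep
  obtain ⟨g, hg, i0, hi0⟩ := hdep
  refine ⟨fun i => if h : i ∈ Finset.range (k+1) then g ⟨i, h⟩ else 0, ?_, i0, i0.2, by simpa using hi0⟩
  rw [← Finset.sum_coe_sort (Finset.range (k+1))]
  simpa using hg

lemma sat_erase (d : ℕ) (χ : ℕ → Fin d → ℤ) (A : Finset ℕ) (i : ℕ) (hi : i ∈ A)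
    (hspan : Qv d (χ i) ∈
      Submodule.span ℚ ((fun j => Qv d (χ j)) '' ((A.erase i : Finset ℕ) : Set ℕ))) :
    satSub d χ (A.erase i) = satSub d χ A := by
  unfold satSub
  have hsp : Submodule.span ℚ ((fun j => Qv d (χ j)) '' ((A.erase i : Finset ℕ) : Set ℕ)) =
      Submodule.span ℚ ((fun j => Qv d (χ j)) '' (A : Set ℕ)) := by
    apply le_antisymm
    · exact Submodule.span_mono (Set.image_mono (by exact_mod_cast Finset.erase_subset i A))
    · rw [Submodule.span_le]
      rintro x ⟨j, hj, rfl⟩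
      by_cases hji : j = i
      · subst hji; exact hspan
      · exact Submodule.subset_span ⟨j, by simp [Finset.mem_erase, hji]; exact_mod_cast hj, rfl⟩
  rw [hsp]

lemma relindex_eq (d : ℕ) (χ : ℕ → Fin d → ℤ) (A : Finset ℕ) (i : ℕ) (hi : i ∈ A) (n : ℤ)
    (hn : n ≠ 0)
    (hmem : n • χ i ∈ latSub d χ (A.erase i))
    (hmin : ∀ m : ℤ, m • χ i ∈ latSub d χ (A.erase i) → n ∣ m) :
    (latSub d χ (A.erase i)).relIndex (latSub d χ A) = n.natAbs := by
  classical
  set K := latSub d χ A with hK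
  set H := (latSub d χ (A.erase i)).addSubgroupOf K with hH
  have hχi : χ i ∈ K := AddSubgroup.subset_closure (Set.mem_image_of_mem _ (by exact_mod_cast hi))
  set x : K ⧸ H := QuotientAddGroup.mk ⟨χ i, hχi⟩ with hx
  have hmk_zsmul : ∀ m : ℤ, m • x = QuotientAddGroup.mk (m • (⟨χ i, hχi⟩ : K)) := by
    intro m; rfl
  have hmem_iff : ∀ z : K, QuotientAddGroup.mk z = (0 : K ⧸ H) ↔ (z : Fin d → ℤ) ∈ latSub d χ (A.erase i) := by
    intro z
    rw [QuotientAddGroup.eq_zero_iff]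
    exact AddSubgroup.mem_addSubgroupOf
  -- every element is a multiple of x
  have htop : ∀ q : K ⧸ H, q ∈ AddSubgroup.zmultiples x := by
    intro q
    induction q using QuotientAddGroup.induction_on with
    | H z =>
      obtain ⟨m, hm⟩ := (mem_latSub d χ A z).mp z.2
      have hz' : (z : Fin d → ℤ) - m i • χ i ∈ latSub d χ (A.erase i) := by
        rw [mem_latSub]
        refine ⟨m, ?_⟩
        rw [hm, ← Finset.add_sum_erase A _ hi, add_sub_cancel_left]
      have : QuotientAddGroup.mk z = m i • x := by
        rw [hmk_zsmul, eq_comm, ← sub_eq_zero, ← QuotientAddGroup.mk_sub, hmem_iff]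
        simpa using (AddSubgroup.neg_mem _ hz')
      rw [this]
      exact AddSubgroup.zsmul_mem _ (AddSubgroup.mem_zmultiples x) _
  -- order of x
  have hnx : ∀ m : ℤ, m • x = 0 ↔ m • χ i ∈ latSub d χ (A.erase i) := by
    intro m
    rw [hmk_zsmul, hmem_iff]
    rfl
  have hord_dvd : addOrderOf x ∣ n.natAbs := by
    apply addOrderOf_dvd_of_nsmul_eq_zero
    have : ((n.natAbs : ℤ)) • x = 0 := by
      rcases Int.natAbs_eq n with h | h
      · rw [← h, hnx]; exact hmem
      · rw [show ((n.natAbs : ℤ)) = -n by omega, hnx, neg_smul]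
        exact AddSubgroup.neg_mem _ hmem
    simpa using this
  have hfin : IsOfFinAddOrder x := by
    rw [isOfFinAddOrder_iff_nsmul_eq_zero]
    refine ⟨n.natAbs, by positivity, ?_⟩
    have : ((n.natAbs : ℤ)) • x = 0 := by
      rcases Int.natAbs_eq n with h | h
      · rw [← h, hnx]; exact hmem
      · rw [show ((n.natAbs : ℤ)) = -n by omega, hnx, neg_smul]
        exact AddSubgroup.neg_mem _ hmem
    simpa using this
  have hdvd_ord : n.natAbs ∣ addOrderOf x := by
    rw [← Int.natCast_dvd_natCast]
    refine (Int.natAbs_dvd).mpr (hmin _ ?_)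
    rw [← hnx]
    have := addOrderOf_nsmul_eq_zero x
    simpa using this
  have hord : addOrderOf x = n.natAbs := Nat.dvd_antisymm hord_dvd hdvd_ord
  have htop' : AddSubgroup.zmultiples x = ⊤ := by
    rw [eq_top_iff]; intro q _; exact htop q
  rw [AddSubgroup.relIndex, AddSubgroup.index, ← hord, ← Nat.card_zmultiples x, htop']
  exact Nat.card_congr AddSubgroup.topEquiv.toEquiv.symm


/-- Lemma `lem:arcirc`.
If `χ_0, …, χ_k ∈ ℤ^d` (k ≥ 1) form a circuit (the whole family is `ℚ`-linearly
dependent, every proper subfamily is `ℚ`-linearly independent), then there are signs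
`c_i ∈ {1,−1}` with `∑_{i=0}^k c_i · m(C∖{i}) · χ_i = 0`, where `m` is the
multiplicity (index of the generated subgroup in its saturation). -/
theorem stmt_0 (d k : ℕ) (hk : 1 ≤ k) (χ : ℕ → Fin d → ℤ)
    (hdep : ¬ LinearIndependent ℚ
      (fun i : (Finset.range (k+1) : Finset ℕ) => Qv d (χ i)))
    (hind : ∀ i ∈ Finset.range (k+1),
      LinearIndependent ℚ
        (fun a : (((Finset.range (k+1)).erase i : Finset ℕ) : Finset ℕ) => Qv d (χ a))) :
    ∃ c : ℕ → ℤ, (∀ i ≤ k, c i = 1 ∨ c i = -1) ∧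
      ∑ i ∈ Finset.range (k+1),
        (c i * (mult d χ ((Finset.range (k+1)).erase i) : ℤ)) • χ i = 0 := by
  classical
  set C := Finset.range (k+1) with hCdef
  obtain ⟨a, ha, i0, hi0C, hi00⟩ := exists_rel d k χ hdep
  have hindZ : ∀ i ∈ C, LinearIndependent ℤ
      (fun a : ((C.erase i : Finset ℕ) : Finset ℕ) => χ a) :=
    fun i hi => (li_trans d χ (C.erase i)).mp (hind i hi)
  have hvanish : ∀ (b : ℕ → ℤ), ∀ i ∈ C, (∑ j ∈ C.erase i, b j • χ j = 0) →
      ∀ j ∈ C.erase i, b j = 0 := by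
    intro b i hi hsum j hj
    have hli := Fintype.linearIndependent_iff.mp (hindZ i hi)
    exact hli (fun j => b ↑j) ((Finset.sum_coe_sort (C.erase i) (fun j => b j • χ j)).trans hsum) ⟨j, hj⟩
  have hane : ∀ i ∈ C, a i ≠ 0 := by
    intro i hi hai
    have hsum : ∑ j ∈ C.erase i, a j • χ j = 0 := by
      have h5 := Finset.add_sum_erase C (fun j => a j • χ j) hi
      simp only [hai, zero_smul, zero_add] at h5
      rw [h5]
      exact ha
    rcases eq_or_ne i0 i with rfl | hne
    · exact hi00 hai
    · exact hi00 (hvanish a i hi hsum i0 (Finset.mem_erase.mpr ⟨hne, hi0C⟩))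
  set g := C.gcd a with hg
  have hgdvd : ∀ i ∈ C, g ∣ a i := fun i hi => Finset.gcd_dvd hi
  have hg0 : g ≠ 0 := by
    intro h
    exact hane i0 hi0C (Finset.gcd_eq_zero_iff.mp h i0 hi0C)
  set b : ℕ → ℤ := fun i => a i / g with hbdef
  have hab : ∀ i ∈ C, a i = g * b i := fun i hi => (Int.mul_ediv_cancel' (hgdvd i hi)).symm
  have hsumb : ∑ i ∈ C, b i • χ i = 0 := by
    have h2 : g • ∑ i ∈ C, b i • χ i = 0 := by
      rw [Finset.smul_sum, ← ha]
      apply Finset.sum_congr rfl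
      intro i hi
      rw [smul_smul, ← hab i hi]
    rcases smul_eq_zero.mp h2 with h | h
    · exact absurd h hg0
    · exact h
  have hbne : ∀ i ∈ C, b i ≠ 0 := by
    intro i hi h0
    exact hane i hi (by rw [hab i hi, h0, mul_zero])
  have hgcdb : C.gcd b = 1 := Finset.gcd_div_eq_one hi0C hi00
  -- the rational span relation
  have hQrel : ∀ i ∈ C, Qv d (χ i) ∈
      Submodule.span ℚ ((fun j => Qv d (χ j)) '' ((C.erase i : Finset ℕ) : Set ℕ)) := by
    intro i hi
    have hq : ∑ j ∈ C, (b j : ℚ) • Qv d (χ j) = 0 := by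
      have h3 := congrArg (fQ d) hsumb
      rw [map_sum, map_zero] at h3
      rw [← h3]
      apply Finset.sum_congr rfl
      intro j _
      rw [map_zsmul, Int.cast_smul_eq_zsmul]
      rfl
    have hsplit : (b i : ℚ) • Qv d (χ i) = - ∑ j ∈ C.erase i, (b j : ℚ) • Qv d (χ j) := by
      rw [eq_neg_iff_add_eq_zero, Finset.add_sum_erase C (fun j => (b j : ℚ) • Qv d (χ j)) hi]
      exact hq
    have hmem : (b i : ℚ) • Qv d (χ i) ∈
        Submodule.span ℚ ((fun j => Qv d (χ j)) '' ((C.erase i : Finset ℕ) : Set ℕ)) := by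
      rw [hsplit]
      refine neg_mem (Submodule.sum_mem _ fun j hj => Submodule.smul_mem _ _ ?_)
      exact Submodule.subset_span ⟨j, by exact_mod_cast hj, rfl⟩
    have h4 := Submodule.smul_mem _ ((b i : ℚ)⁻¹) hmem
    rwa [inv_smul_smul₀ (by exact_mod_cast hbne i hi)] at h4
  have hsat : ∀ i ∈ C, satSub d χ (C.erase i) = satSub d χ C :=
    fun i hi => sat_erase d χ C i hi (hQrel i hi)
  -- divisibility
  have hdvd : ∀ i ∈ C, ∀ n : ℤ, n • χ i ∈ latSub d χ (C.erase i) → b i ∣ n := by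
    intro i hi n hmem
    obtain ⟨m, hm⟩ := (mem_latSub d χ (C.erase i) _).mp hmem
    have e1 : ∑ j ∈ C.erase i, (b i * m j) • χ j = (b i * n) • χ i := by
      calc ∑ j ∈ C.erase i, (b i * m j) • χ j
          = b i • ∑ j ∈ C.erase i, m j • χ j := by
            rw [Finset.smul_sum]; exact Finset.sum_congr rfl fun j _ => (smul_smul _ _ _).symm
        _ = (b i * n) • χ i := by rw [← hm, smul_smul]
    have e2 : ∑ j ∈ C.erase i, (n * b j) • χ j = -((n * b i) • χ i) := by
      have h6 := Finset.add_sum_erase C (fun j => b j • χ j) hi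
      rw [hsumb] at h6
      have h7 : ∑ j ∈ C.erase i, b j • χ j = -(b i • χ i) := eq_neg_of_add_eq_zero_right h6
      calc ∑ j ∈ C.erase i, (n * b j) • χ j
          = n • ∑ j ∈ C.erase i, b j • χ j := by
            rw [Finset.smul_sum]; exact Finset.sum_congr rfl fun j _ => (smul_smul _ _ _).symm
        _ = -((n * b i) • χ i) := by rw [h7, smul_neg, smul_smul]
    have e0 : ∑ j ∈ C.erase i, (b i * m j + n * b j) • χ j = 0 := by
      have e3 : ∑ j ∈ C.erase i, ((b i * m j) • χ j + (n * b j) • χ j) = 0 := by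
        rw [Finset.sum_add_distrib, e1, e2, mul_comm (b i) n, add_neg_cancel]
      rw [← e3]
      exact Finset.sum_congr rfl fun j _ => add_smul _ _ _
    have hz := hvanish (fun j => b i * m j + n * b j) i hi e0
    have hdall : ∀ j ∈ C, b i ∣ n * b j := by
      intro j hj
      rcases eq_or_ne j i with rfl | hne
      · exact dvd_mul_left (b j) n
      · have h8 : b i * m j + n * b j = 0 := hz j (Finset.mem_erase.mpr ⟨hne, hj⟩)
        exact ⟨-(m j), by linarith⟩
    have h9 : b i ∣ C.gcd (fun j => n * b j) := Finset.dvd_gcd hdall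
    rw [Finset.gcd_mul_left, hgcdb, mul_one, ← Int.abs_eq_normalize, dvd_abs] at h9
    exact h9
  -- lattice inclusions
  have hler : ∀ i : ℕ, latSub d χ (C.erase i) ≤ latSub d χ C := by
    intro i
    apply AddSubgroup.closure_mono
    apply Set.image_mono
    exact_mod_cast Finset.erase_subset i C
  have hlatle : latSub d χ C ≤ satSub d χ C := by
    rw [latSub, AddSubgroup.closure_le]
    rintro x ⟨j, hj, rfl⟩
    show intCastHom d (χ j) ∈ (Submodule.span ℚ ((fun i => Qv d (χ i)) '' (C : Set ℕ))).toAddSubgroup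
    exact Submodule.subset_span ⟨j, hj, rfl⟩
  have hmult : ∀ i ∈ C, (mult d χ (C.erase i) : ℤ) = ((b i).natAbs : ℤ) * (mult d χ C : ℤ) := by
    intro i hi
    have hbmem : b i • χ i ∈ latSub d χ (C.erase i) := by
      rw [mem_latSub]
      refine ⟨fun j => -(b j), ?_⟩
      have h6 := Finset.add_sum_erase C (fun j => b j • χ j) hi
      rw [hsumb] at h6
      have h7 : ∑ j ∈ C.erase i, b j • χ j = -(b i • χ i) := eq_neg_of_add_eq_zero_right h6
      rw [← neg_eq_iff_eq_neg.mpr h7, ← Finset.sum_neg_distrib]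
      exact Finset.sum_congr rfl fun j _ => by rw [neg_smul]
    have h1 : (latSub d χ (C.erase i)).relIndex (latSub d χ C) = (b i).natAbs :=
      relindex_eq d χ C i hi (b i) (hbne i hi) hbmem (fun m hm => hdvd i hi m hm)
    rw [mult, hsat i hi, ← AddSubgroup.relIndex_mul_relIndex _ _ (satSub d χ C) (hler i) hlatle, h1, mult]
    push_cast
    ring
  refine ⟨fun i => if b i < 0 then -1 else 1, fun i _ => by by_cases h : b i < 0 <;> simp [h], ?_⟩
  have key : ∀ i ∈ C, ((if b i < 0 then (-1:ℤ) else 1) * (mult d χ (C.erase i) : ℤ)) • χ i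
      = (mult d χ C : ℤ) • (b i • χ i) := by
    intro i hi
    rw [smul_smul]
    congr 1
    rw [hmult i hi]
    have habs : ((b i).natAbs : ℤ) = |b i| := (Int.abs_eq_natAbs _).symm
    by_cases h : b i < 0
    · rw [if_pos h, habs, abs_of_neg h]; ring
    · rw [if_neg h, habs, abs_of_nonneg (not_lt.mp h)]; ring
  calc ∑ i ∈ C, ((if b i < 0 then (-1:ℤ) else 1) * (mult d χ (C.erase i) : ℤ)) • χ i
      = ∑ i ∈ C, (mult d χ C : ℤ) • (b i • χ i) := Finset.sum_congr rfl key
    _ = (mult d χ C : ℤ) • ∑ i ∈ C, b i • χ i := by rw [Finset.smul_sum]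
    _ = 0 := by rw [hsumb, smul_zero]
end
end

section
/- Suppose χ_0, χ_1, …, χ_k ∈ ℤ^d are nonzero and χ_0 = ∑_{i=1}^k χ_i. Then in the exterior algebra of Kähler differentials the identity ω_1 ∧ ω_2 ∧ ⋯ ∧ ω_k = ω_0 ∧ ∏_{i=2}^k (ω_i − ω_{i−1} + ψ_{i−1}) holds, where the product on the right is the wedge product taken in increasing order of i. -/
open scoped BigOperators

noncomputable section

set_option synthInstance.maxHeartbeats 1000000
set_option maxHeartbeats 1000000

/-- The field of rational functions in `d` variables over `ℚ`. -/
abbrev KK (d : ℕ) : Type := FractionRing (MvPolynomial (Fin d) ℚ)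

/-- The module of Kähler differentials of `K` over `ℚ`. -/
abbrev ΩK (d : ℕ) : Type := KaehlerDifferential ℚ (KK d)

/-- The Laurent monomial `x^χ` associated with a character `χ ∈ ℤ^d`. -/
def xpow (d : ℕ) (χ : Fin d → ℤ) : KK d :=
  ∏ j : Fin d, (algebraMap (MvPolynomial (Fin d) ℚ) (KK d) (MvPolynomial.X j)) ^ (χ j)

/-- The 1-form `ψ_χ = (x^χ)⁻¹ • D(x^χ)`, i.e. `dlog(x^χ)`. -/
def psiF (d : ℕ) (χ : Fin d → ℤ) : ΩK d :=
  (xpow d χ)⁻¹ • (KaehlerDifferential.D ℚ (KK d)) (xpow d χ)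

/-- The 1-form `ω_χ = (1 - x^χ)⁻¹ • D(1 - x^χ)`, i.e. `dlog(1 - x^χ)`. -/
def omegaF (d : ℕ) (χ : Fin d → ℤ) : ΩK d :=
  (1 - xpow d χ)⁻¹ • (KaehlerDifferential.D ℚ (KK d)) (1 - xpow d χ)

/-- The 1-form `ω̄_χ = 2ω_χ - ψ_χ`. -/
def obarF (d : ℕ) (χ : Fin d → ℤ) : ΩK d := 2 • omegaF d χ - psiF d χ

/-- The exterior algebra of the module of Kähler differentials over `K`. -/
abbrev ExtK (d : ℕ) := ExteriorAlgebra (KK d) (ΩK d)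

/-- Inclusion of a 1-form into the exterior algebra. -/
def wdg (d : ℕ) (v : ΩK d) : ExtK d := ExteriorAlgebra.ι (KK d) v

/-- Ordered (wedge) product of elements indexed by a finite set of naturals,
taken in increasing order of the index. -/
def oprod (d : ℕ) (A : Finset ℕ) (f : ℕ → ExtK d) : ExtK d :=
  ((A.sort (· ≤ ·)).map f).prod

/-! ### Auxiliary general lemmas -/

lemma my_sort_Icc (a b : ℕ) : (Finset.Icc a b).sort (·≤·) = List.range' a (b+1-a) := by
  refine List.Perm.eq_of_pairwise' (Finset.pairwise_sort _ _)
    ((List.pairwise_lt_range').imp le_of_lt) ?_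
  have h := Finset.sort_eq (Finset.Icc a b) (·≤·)
  rw [Nat.Icc_eq_range'] at h
  exact Quotient.exact h

lemma my_prod_Icc_list {A : Type*} [CommMonoid A] (g : ℕ → A) (a b : ℕ) :
    ∏ i ∈ Finset.Icc a b, g i = ((List.range' a (b+1-a)).map g).prod := by
  rw [Finset.prod_eq_multiset_prod, Nat.Icc_eq_range']
  simp

section Abstract
variable {R M : Type*} [CommRing R] [AddCommGroup M] [Module R M]

local notation "ιι" => ExteriorAlgebra.ι R

lemma my_anticomm (x y : M) : ιι x * ιι y = -(ιι y * ιι x) :=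
  eq_neg_of_add_eq_zero_left (ExteriorAlgebra.ι_add_mul_swap x y)

lemma my_ι_mul_listprod (x : M) (l : List M) :
    ιι x * (l.map ιι).prod = ((-1:R)^l.length) • ((l.map ιι).prod * ιι x) := by
  induction l with
  | nil => simp
  | cons h t ih =>
    simp only [List.map_cons, List.prod_cons, List.length_cons]
    rw [← mul_assoc, my_anticomm x h, neg_mul, mul_assoc, ih, mul_smul_comm,
      ← mul_assoc, pow_succ, ← neg_smul]
    ring_nf

lemma my_lemB (v : ℕ → M) (a b : ℕ → R) (n : ℕ) :
    ((List.range' 2 n).map (fun i => ιι (a i • v i + b (i-1) • v (i-1)))).prod * ιι (v (n+1))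
      = (∏ j ∈ Finset.Icc 1 n, b j) • ((List.range' 1 (n+1)).map (fun i => ιι (v i))).prod := by
  induction n with
  | zero => simp
  | succ n ih =>
    rw [List.range'_1_concat (s := 2) (n := n), List.range'_1_concat (s := 1) (n := (n+1)), Nat.add_comm 2 n,
      Nat.add_comm 1 (n+1)]
    simp only [List.map_append, List.prod_append, List.map_cons, List.map_nil,
      List.prod_cons, List.prod_nil, mul_one, Nat.add_sub_cancel]
    rw [mul_assoc, map_add, map_smul, map_smul, add_mul, smul_mul_assoc, smul_mul_assoc,
      ExteriorAlgebra.ι_sq_zero, smul_zero, zero_add, mul_smul_comm, ← mul_assoc,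
      show n + 2 - 1 = n + 1 from rfl, ih,
      smul_mul_assoc, Finset.prod_Icc_succ_top (by omega : 1 ≤ n + 1), mul_smul, smul_smul,
      mul_comm (b (n+1)), mul_smul]

lemma my_W_mul_last (v : ℕ → M) (n : ℕ) :
    ((List.range' 1 (n+1)).map (fun i => ιι (v i))).prod * ιι (v (n+1)) = 0 := by
  rw [List.range'_1_concat (s := 1) (n := n), Nat.add_comm 1 n]
  simp [mul_assoc, ExteriorAlgebra.ι_sq_zero]

lemma my_S_succ (a b : ℕ → R) (n : ℕ) :
    ∑ m ∈ Finset.range (n+1+1), ((-1:R)^m * ∏ j ∈ Finset.Icc 1 m, b j) *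
          ∏ j ∈ Finset.Icc (m+2) (n+1+1), a j
        = (∑ m ∈ Finset.range (n+1), ((-1:R)^m * ∏ j ∈ Finset.Icc 1 m, b j) *
            ∏ j ∈ Finset.Icc (m+2) (n+1), a j) * a (n+2)
          + (-1:R)^(n+1) * ∏ j ∈ Finset.Icc 1 (n+1), b j := by
  rw [Finset.sum_range_succ, Finset.Icc_eq_empty (by omega : ¬ (n+1+2) ≤ n+1+1),
    Finset.prod_empty, mul_one, Finset.sum_mul]
  congr 1
  refine Finset.sum_congr rfl (fun m hm => ?_)
  have hm' : m + 2 ≤ n + 2 := by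
    have := Finset.mem_range.mp hm; omega
  rw [show n+1+1 = n+2 from rfl, Finset.prod_Icc_succ_top hm', ← mul_assoc]

lemma my_lemA (v : ℕ → M) (a b : ℕ → R) (n : ℕ) :
    ιι (∑ i ∈ Finset.range (n+1), v (i+1)) *
      ((List.range' 2 n).map (fun i => ιι (a i • v i + b (i-1) • v (i-1)))).prod
    = (∑ m ∈ Finset.range (n+1), ((-1:R)^m * ∏ j ∈ Finset.Icc 1 m, b j) *
        (∏ j ∈ Finset.Icc (m+2) (n+1), a j)) •
      ((List.range' 1 (n+1)).map (fun i => ιι (v i))).prod := by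
  induction n with
  | zero =>
    rw [Finset.sum_range_one, Finset.sum_range_one]
    rw [Finset.Icc_eq_empty (by omega : ¬ (1:ℕ) ≤ 0), Finset.Icc_eq_empty (by omega : ¬ (2:ℕ) ≤ 1)]
    simp
  | succ n ih =>
    rw [List.range'_1_concat (s := 2) (n := n), Nat.add_comm 2 n, Finset.sum_range_succ (f := fun i => v (i+1)),
      List.range'_1_concat (s := 1) (n := (n+1)), Nat.add_comm 1 (n+1)]
    simp only [List.map_append, List.prod_append, List.map_cons, List.map_nil,
      List.prod_cons, List.prod_nil, mul_one, Nat.add_sub_cancel,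
      show n + 2 - 1 = n + 1 from rfl]
    set P : ExteriorAlgebra R M :=
      ((List.range' 2 n).map (fun i => ιι (a i • v i + b (i-1) • v (i-1)))).prod with hP
    set W : ExteriorAlgebra R M := ((List.range' 1 (n+1)).map (fun i => ιι (v i))).prod with hW
    rw [map_add, add_mul, ← mul_assoc, ← mul_assoc]
    have h1 : ιι (∑ i ∈ Finset.range (n+1), v (i+1)) * P *
        ιι (a (n+2) • v (n+2) + b (n+1) • v (n+1))
        = ((∑ m ∈ Finset.range (n+1), ((-1:R)^m * ∏ j ∈ Finset.Icc 1 m, b j) *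
            (∏ j ∈ Finset.Icc (m+2) (n+1), a j)) * a (n+2)) • (W * ιι (v (n+2))) := by
      rw [ih, smul_mul_assoc, map_add, map_smul, map_smul, mul_add, mul_smul_comm,
        mul_smul_comm, my_W_mul_last v n, smul_zero, add_zero, smul_smul, mul_comm _ (a (n+2)),
        mul_comm (a (n+2))]
    have hPl : ιι (v (n+2)) * P = ((-1:R)^n) • (P * ιι (v (n+2))) := by
      have hmm : P
          = (((List.range' 2 n).map (fun i => a i • v i + b (i-1) • v (i-1))).map ιι).prod := by
        rw [List.map_map]; rfl
      have hlen : (((List.range' 2 n)).map (fun i => a i • v i + b (i-1) • v (i-1))).length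
          = n := by simp
      rw [hmm, my_ι_mul_listprod, hlen]
    have h2 : ιι (v (n+2)) * P * ιι (a (n+2) • v (n+2) + b (n+1) • v (n+1))
        = ((-1:R)^(n+1) * (∏ j ∈ Finset.Icc 1 (n+1), b j)) • (W * ιι (v (n+2))) := by
      rw [hPl, smul_mul_assoc, mul_assoc, map_add, map_smul, map_smul, mul_add, mul_smul_comm,
        mul_smul_comm, ExteriorAlgebra.ι_sq_zero, smul_zero, zero_add,
        my_anticomm (v (n+2)) (v (n+1)), smul_neg]
      rw [mul_neg, mul_smul_comm, ← mul_assoc, my_lemB v a b n, smul_mul_assoc, smul_smul,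
        ← neg_smul, smul_smul, Finset.prod_Icc_succ_top (by omega : 1 ≤ n+1)]
      congr 1
      ring
    rw [h1, h2, ← add_smul, my_S_succ a b n]

lemma my_smul_listprod {R A : Type*} [CommSemiring R] [Semiring A]
    [Module R A] [IsScalarTower R A A] [SMulCommClass R A A]
    (c : ℕ → R) (g : ℕ → A) (l : List ℕ) :
    (l.map (fun i => c i • g i)).prod = (l.map c).prod • (l.map g).prod := by
  induction l with
  | nil => simp
  | cons h t ih =>
    simp only [List.map_cons, List.prod_cons]
    rw [ih, smul_mul_assoc, mul_smul_comm, mul_smul]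

end Abstract

lemma my_scalar {K : Type*} [Field K] (t : ℕ → K) (n : ℕ)
    (ht : ∀ j ∈ Finset.Icc 1 (n+1), t j ≠ 1) :
    (∏ j ∈ Finset.Icc 1 (n+1), (t j - 1)) *
      (∑ m ∈ Finset.range (n+1), ((-1:K)^m * ∏ j ∈ Finset.Icc 1 m, (1 - t j * (t j - 1)⁻¹)) *
        ∏ j ∈ Finset.Icc (m+2) (n+1), (t j * (t j - 1)⁻¹))
    = (∏ j ∈ Finset.Icc 1 (n+1), t j) - 1 := by
  induction n with
  | zero =>
    rw [Finset.sum_range_one, Finset.Icc_self, Finset.Icc_eq_empty (by omega : ¬ (1:ℕ) ≤ 0),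
      Finset.Icc_eq_empty (by omega : ¬ (2:ℕ) ≤ 1)]
    simp
  | succ n ih =>
    have ht' : ∀ j ∈ Finset.Icc 1 (n+1), t j ≠ 1 := by
      intro j hj
      refine ht j ?_
      simp only [Finset.mem_Icc] at hj ⊢; omega
    have hsub : ∀ j ∈ Finset.Icc 1 (n+1+1), t j - 1 ≠ 0 := by
      intro j hj
      exact sub_ne_zero.mpr (ht j hj)
    rw [my_S_succ (fun j => t j * (t j - 1)⁻¹) (fun j => 1 - t j * (t j - 1)⁻¹) n]
    rw [show n+1+1 = n+2 from rfl, Finset.prod_Icc_succ_top (by omega : 1 ≤ n+2) (f := fun j => t j - 1),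
      Finset.prod_Icc_succ_top (by omega : 1 ≤ n+2) (f := fun j => t j)]
    have hne2 : t (n+2) - 1 ≠ 0 := hsub (n+2) (by simp)
    have f1 : (t (n+2) - 1) * (t (n+2) * (t (n+2) - 1)⁻¹) = t (n+2) := by
      field_simp
    have f2 := ih ht'
    have f3 : (∏ j ∈ Finset.Icc 1 (n+1), (t j - 1)) *
        (∏ j ∈ Finset.Icc 1 (n+1), (1 - t j * (t j - 1)⁻¹)) = (-1:K)^(n+1) := by
      rw [← Finset.prod_mul_distrib]
      rw [Finset.prod_congr rfl (g := fun _ => (-1:K)) (fun j hj => ?_)]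
      · rw [Finset.prod_const, Nat.card_Icc]
        norm_num
      · have h := hsub j (by simp only [Finset.mem_Icc] at hj ⊢; omega)
        field_simp
        ring
    have f4 : ((-1:K)^(n+1)) * ((-1:K)^(n+1)) = 1 := by
      rw [← pow_add]
      exact Even.neg_one_pow ⟨n+1, by ring⟩
    set A1 := ∏ j ∈ Finset.Icc 1 (n+1), (t j - 1)
    set S := ∑ m ∈ Finset.range (n+1), ((-1:K)^m * ∏ j ∈ Finset.Icc 1 m, (1 - t j * (t j - 1)⁻¹)) *
        ∏ j ∈ Finset.Icc (m+2) (n+1), (t j * (t j - 1)⁻¹)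
    set B := ∏ j ∈ Finset.Icc 1 (n+1), (1 - t j * (t j - 1)⁻¹)
    set T := ∏ j ∈ Finset.Icc 1 (n+1), t j
    linear_combination (A1 * S) * f1 + t (n+2) * f2 + ((-1:K)^(n+1) * (t (n+2) - 1)) * f3 +
      (t (n+2) - 1) * f4

section Concrete
variable (d : ℕ)

lemma my_xpow_ne_zero (χ : Fin d → ℤ) : xpow d χ ≠ 0 := by
  unfold xpow
  rw [Finset.prod_ne_zero_iff]
  intro j _
  apply zpow_ne_zero
  exact (map_ne_zero_iff _ (IsFractionRing.injective (MvPolynomial (Fin d) ℚ) (KK d))).mpr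
    (MvPolynomial.X_ne_zero _)

lemma my_xpow_zero : xpow d (0 : Fin d → ℤ) = 1 := by
  unfold xpow; simp

lemma my_xpow_add (χ₁ χ₂ : Fin d → ℤ) : xpow d (χ₁ + χ₂) = xpow d χ₁ * xpow d χ₂ := by
  unfold xpow
  rw [← Finset.prod_mul_distrib]
  refine Finset.prod_congr rfl fun j _ => ?_
  rw [Pi.add_apply, zpow_add₀]
  exact (map_ne_zero_iff _ (IsFractionRing.injective (MvPolynomial (Fin d) ℚ) (KK d))).mpr
    (MvPolynomial.X_ne_zero _)

lemma my_xpow_sum (s : Finset ℕ) (χ : ℕ → Fin d → ℤ) :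
    xpow d (∑ i ∈ s, χ i) = ∏ i ∈ s, xpow d (χ i) := by
  induction s using Finset.cons_induction with
  | empty => simp [my_xpow_zero]
  | cons i s hi ih => rw [Finset.sum_cons, Finset.prod_cons, my_xpow_add, ih]

lemma my_xpow_ne_one (χ : Fin d → ℤ) (hχ : χ ≠ 0) : xpow d χ ≠ 1 := by
  intro h
  apply hχ
  set φ := algebraMap (MvPolynomial (Fin d) ℚ) (KK d) with hφ
  have hinj : Function.Injective φ := IsFractionRing.injective _ _
  have hX : ∀ j : Fin d, φ (MvPolynomial.X j) ≠ 0 := fun j =>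
    (map_ne_zero_iff φ hinj).mpr (MvPolynomial.X_ne_zero _)
  set p : Fin d → ℕ := fun j => (χ j).toNat with hp
  set q : Fin d → ℕ := fun j => (-(χ j)).toNat with hq
  have hpq : ∀ j, χ j = (p j : ℤ) - (q j : ℤ) := fun j => by
    simp only [hp, hq]; omega
  have hx : xpow d χ
      = (∏ j, φ (MvPolynomial.X j) ^ (p j)) / (∏ j, φ (MvPolynomial.X j) ^ (q j)) := by
    unfold xpow
    rw [← Finset.prod_div_distrib]
    refine Finset.prod_congr rfl fun j _ => ?_
    rw [hpq j, zpow_sub₀ (hX j), zpow_natCast, zpow_natCast]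
  have hq0 : (∏ j, φ (MvPolynomial.X j) ^ (q j)) ≠ 0 := by
    rw [Finset.prod_ne_zero_iff]
    exact fun j _ => pow_ne_zero _ (hX j)
  rw [hx, div_eq_one_iff_eq hq0] at h
  have h2 : φ (∏ j, MvPolynomial.X (R := ℚ) j ^ p j) = φ (∏ j, MvPolynomial.X j ^ q j) := by
    rw [map_prod, map_prod]
    simp only [map_pow]
    exact h
  have h3 := hinj h2
  have hmono : ∀ r : Fin d → ℕ, (∏ j, MvPolynomial.X (R := ℚ) j ^ r j)
      = MvPolynomial.monomial (Finsupp.equivFunOnFinite.symm r) (1 : ℚ) := by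
    intro r
    rw [← MvPolynomial.prod_X_pow_eq_monomial]
    have hcoe : ⇑(Finsupp.equivFunOnFinite.symm r) = r := rfl
    refine (Finset.prod_subset (Finset.subset_univ _) fun j _ hj => ?_).symm
    have h0 : (Finsupp.equivFunOnFinite.symm r) j = 0 := Finsupp.notMem_support_iff.mp hj
    rw [hcoe] at h0
    rw [h0, pow_zero]
  rw [hmono p, hmono q] at h3
  have h4 := MvPolynomial.monomial_left_injective (one_ne_zero (α := ℚ)) h3
  have h5 : p = q := Finsupp.equivFunOnFinite.symm.injective h4
  funext j
  have h6 := hpq j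
  rw [h5] at h6
  show χ j = 0
  omega

lemma my_psiF_zero : psiF d 0 = 0 := by
  unfold psiF
  rw [my_xpow_zero]
  simp

lemma my_psiF_add (χ₁ χ₂ : Fin d → ℤ) : psiF d (χ₁ + χ₂) = psiF d χ₁ + psiF d χ₂ := by
  unfold psiF
  rw [my_xpow_add]
  have hu : xpow d χ₁ ≠ 0 := my_xpow_ne_zero d χ₁
  have hv : xpow d χ₂ ≠ 0 := my_xpow_ne_zero d χ₂
  rw [Derivation.leibniz, smul_add, smul_smul, smul_smul,
    show (xpow d χ₁ * xpow d χ₂)⁻¹ * xpow d χ₁ = (xpow d χ₂)⁻¹ by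
      rw [mul_inv]; field_simp,
    show (xpow d χ₁ * xpow d χ₂)⁻¹ * xpow d χ₂ = (xpow d χ₁)⁻¹ by
      rw [mul_inv]; field_simp]
  exact add_comm _ _

lemma my_psiF_sum (s : Finset ℕ) (χ : ℕ → Fin d → ℤ) :
    psiF d (∑ i ∈ s, χ i) = ∑ i ∈ s, psiF d (χ i) := by
  induction s using Finset.cons_induction with
  | empty => simp [my_psiF_zero]
  | cons i s hi ih => rw [Finset.sum_cons, Finset.sum_cons, my_psiF_add, ih]

lemma my_omegaF_eq (χ : Fin d → ℤ) (hχ : χ ≠ 0) :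
    omegaF d χ = (xpow d χ * (xpow d χ - 1)⁻¹) • psiF d χ := by
  unfold omegaF psiF
  have hu : xpow d χ ≠ 0 := my_xpow_ne_zero d χ
  have h1 : xpow d χ - 1 ≠ 0 := sub_ne_zero.mpr (my_xpow_ne_one d χ hχ)
  rw [map_sub, Derivation.map_one_eq_zero, zero_sub, smul_neg, smul_smul, ← neg_smul]
  congr 1
  rw [show (1 : KK d) - xpow d χ = -(xpow d χ - 1) by ring, inv_neg]
  field_simp

end Concrete

/-- Lemma `lem:prodotto`.
If `χ_0, …, χ_k ∈ ℤ^d` are nonzero and `χ_0 = ∑_{i=1}^k χ_i`, then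
`ω_1 ∧ ⋯ ∧ ω_k = ω_0 ∧ ∏_{i=2}^k (ω_i − ω_{i−1} + ψ_{i−1})`. -/
theorem stmt_1 (d k : ℕ) (χ : ℕ → Fin d → ℤ)
    (hne : ∀ i ≤ k, χ i ≠ 0)
    (hsum : χ 0 = ∑ i ∈ Finset.Icc 1 k, χ i) :
    oprod d (Finset.Icc 1 k) (fun i => wdg d (omegaF d (χ i))) =
      wdg d (omegaF d (χ 0)) *
        oprod d (Finset.Icc 2 k) (fun i =>
          wdg d (omegaF d (χ i) - omegaF d (χ (i - 1)) + psiF d (χ (i - 1)))) := by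
  cases k with
  | zero =>
    exact absurd (by simpa using hsum) (hne 0 le_rfl)
  | succ n =>
    set t : ℕ → KK d := fun i => xpow d (χ i) with hts
    set c : ℕ → KK d := fun i => t i * (t i - 1)⁻¹ with hcs
    set v : ℕ → ΩK d := fun i => psiF d (χ i) with hvs
    have htne1 : ∀ i ≤ n+1, t i ≠ 1 := fun i hi => my_xpow_ne_one d (χ i) (hne i hi)
    have homega : ∀ i ≤ n+1, omegaF d (χ i) = c i • v i := fun i hi =>
      my_omegaF_eq d (χ i) (hne i hi)
    have hT : t 0 = ∏ i ∈ Finset.Icc 1 (n+1), t i := by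
      simp only [hts]
      rw [hsum, my_xpow_sum]
    have hT1 : t 0 ≠ 1 := my_xpow_ne_one d (χ 0) (hne 0 (Nat.zero_le _))
    unfold oprod
    rw [my_sort_Icc 1 (n+1), my_sort_Icc 2 (n+1),
      show n+1+1-1 = n+1 from rfl, show n+1+1-2 = n from rfl]
    have hL : ((List.range' 1 (n+1)).map (fun i => wdg d (omegaF d (χ i)))).prod
        = ((List.range' 1 (n+1)).map
            (fun i => c i • ExteriorAlgebra.ι (KK d) (v i))).prod := by
      refine congrArg List.prod (List.map_congr_left fun i hi => ?_)
      have hi' := List.mem_range'_1.mp hi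
      rw [wdg, homega i (by omega), map_smul]
    have hR : ((List.range' 2 n).map
          (fun i => wdg d (omegaF d (χ i) - omegaF d (χ (i-1)) + psiF d (χ (i-1))))).prod
        = ((List.range' 2 n).map
            (fun i => ExteriorAlgebra.ι (KK d) (c i • v i + (1 - c (i-1)) • v (i-1)))).prod := by
      refine congrArg List.prod (List.map_congr_left fun i hi => ?_)
      have hi' := List.mem_range'_1.mp hi
      rw [wdg]
      congr 1
      rw [homega i (by omega), homega (i-1) (by omega), sub_smul, one_smul]
      have : psiF d (χ (i-1)) = v (i-1) := by rw [hvs]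
      rw [this]
      abel
    rw [hL, hR]
    have hv0 : psiF d (χ 0) = ∑ i ∈ Finset.range (n+1), v (i+1) := by
      rw [hsum, my_psiF_sum]
      rw [show Finset.Icc 1 (n+1) = Finset.Ico 1 (n+2) from (Finset.Ico_add_one_right_eq_Icc ..).symm,
        Finset.sum_Ico_eq_sum_range]
      refine Finset.sum_congr rfl fun i _ => ?_
      simp only [hvs, Nat.add_comm]
    have hw0 : wdg d (omegaF d (χ 0))
        = c 0 • ExteriorAlgebra.ι (KK d) (∑ i ∈ Finset.range (n+1), v (i+1)) := by
      rw [wdg, homega 0 (Nat.zero_le _), map_smul]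
      have hv0' : v 0 = ∑ i ∈ Finset.range (n+1), v (i+1) := hv0
      rw [hv0']
    rw [hw0, smul_mul_assoc, my_lemA v c (fun i => 1 - c i) n,
      my_smul_listprod c (fun i => ExteriorAlgebra.ι (KK d) (v i)) (List.range' 1 (n+1)),
      smul_smul]
    congr 1
    have hc : ((List.range' 1 (n+1)).map c).prod = ∏ i ∈ Finset.Icc 1 (n+1), c i := by
      rw [my_prod_Icc_list c 1 (n+1), show n+1+1-1 = n+1 from rfl]
    rw [hc]
    -- scalar identity
    have hA1 : (∏ j ∈ Finset.Icc 1 (n+1), (t j - 1)) ≠ 0 :=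
      Finset.prod_ne_zero_iff.mpr fun j hj =>
        sub_ne_zero.mpr (htne1 j (Finset.mem_Icc.mp hj).2)
    have hsc := my_scalar t n (fun j hj => htne1 j (Finset.mem_Icc.mp hj).2)
    have hTm1 : (∏ i ∈ Finset.Icc 1 (n+1), t i) - 1 ≠ 0 := by
      rw [← hT]; exact sub_ne_zero.mpr hT1
    simp only [hcs]
    rw [Finset.prod_mul_distrib, Finset.prod_inv_distrib]
    rw [hT]
    set T := ∏ i ∈ Finset.Icc 1 (n+1), t i with hTdef
    set A1 := ∏ j ∈ Finset.Icc 1 (n+1), (t j - 1) with hA1def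
    set S := ∑ m ∈ Finset.range (n+1),
        ((-1:KK d)^m * ∏ j ∈ Finset.Icc 1 m, (1 - t j * (t j - 1)⁻¹)) *
          ∏ j ∈ Finset.Icc (m+2) (n+1), (t j * (t j - 1)⁻¹) with hSdef
    have hSne : S ≠ 0 := by
      intro h0
      rw [h0, mul_zero] at hsc
      exact hTm1 hsc.symm
    rw [← hsc, mul_inv]
    rw [show T * (A1⁻¹ * S⁻¹) * S = T * A1⁻¹ * (S⁻¹ * S) from by ring,
      inv_mul_cancel₀ hSne, mul_one]
end
end

section
/- Suppose χ_0, χ_1, …, χ_k ∈ ℤ^d (k ≥ 1) are nonzero and ∑_{i=0}^k c_i χ_i = 0 for some signs c_0, …, c_k ∈ {1, −1}. Then ∏_{i=1}^{k} (ω̄_i + c_i ψ_i − ω̄_{i−1} + c_{i−1} ψ_{i−1}) = 0 in the exterior algebra, where the product is the wedge product taken in increasing order of i. -/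
open scoped BigOperators

noncomputable section

set_option synthInstance.maxHeartbeats 1000000
set_option maxHeartbeats 1000000

lemma algX_ne_zero (d : ℕ) (j : Fin d) :
    (algebraMap (MvPolynomial (Fin d) ℚ) (KK d)) (MvPolynomial.X j) ≠ 0 := by
  intro h
  exact MvPolynomial.X_ne_zero j ((IsFractionRing.injective (MvPolynomial (Fin d) ℚ) (KK d)) (by simpa using h))

lemma xpow_ne_zero (d : ℕ) (χ : Fin d → ℤ) : xpow d χ ≠ 0 := by
  apply Finset.prod_ne_zero_iff.mpr
  intro j _
  exact zpow_ne_zero _ (algX_ne_zero d j)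

lemma xpow_add (d : ℕ) (χ₁ χ₂ : Fin d → ℤ) :
    xpow d (χ₁ + χ₂) = xpow d χ₁ * xpow d χ₂ := by
  rw [xpow, xpow, xpow, ← Finset.prod_mul_distrib]
  exact Finset.prod_congr rfl fun j _ => by
    rw [Pi.add_apply, zpow_add₀ (algX_ne_zero d j)]

lemma xpow_zero' (d : ℕ) : xpow d 0 = 1 := by
  simp [xpow]

lemma xpow_neg (d : ℕ) (χ : Fin d → ℤ) : xpow d (-χ) = (xpow d χ)⁻¹ := by
  have := xpow_add d χ (-χ)
  rw [add_neg_cancel, xpow_zero'] at this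
  exact (inv_eq_of_mul_eq_one_right this.symm).symm

lemma xpow_sum (d : ℕ) (A : Finset ℕ) (μ : ℕ → Fin d → ℤ) :
    xpow d (∑ i ∈ A, μ i) = ∏ i ∈ A, xpow d (μ i) := by
  induction A using Finset.cons_induction with
  | empty => simp [xpow_zero']
  | cons a s ha ih => rw [Finset.sum_cons, Finset.prod_cons, xpow_add, ih]

lemma xpow_natpow (d : ℕ) (a : Fin d → ℕ) :
    xpow d (fun j => (a j : ℤ)) =
      algebraMap (MvPolynomial (Fin d) ℚ) (KK d) (∏ j : Fin d, MvPolynomial.X j ^ (a j)) := by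
  rw [map_prod, xpow]
  exact Finset.prod_congr rfl fun j _ => by rw [map_pow, zpow_natCast]

lemma prod_X_pow_inj (d : ℕ) (a b : Fin d → ℕ)
    (h : (∏ j : Fin d, (MvPolynomial.X j : MvPolynomial (Fin d) ℚ) ^ (a j)) =
         ∏ j : Fin d, MvPolynomial.X j ^ (b j)) : a = b := by
  have ha : ∀ (e : Fin d → ℕ), (∏ j : Fin d, (MvPolynomial.X j : MvPolynomial (Fin d) ℚ) ^ (e j))
      = MvPolynomial.monomial (Finsupp.equivFunOnFinite.symm e) 1 := by
    intro e
    rw [← MvPolynomial.prod_X_pow_eq_monomial]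
    refine (Finset.prod_subset (Finset.subset_univ _) ?_).symm
    intro j _ hj
    have : e j = 0 := by
      by_contra hne
      exact hj (by simpa [Finsupp.mem_support_iff] using hne)
    simp [this]
  rw [ha a, ha b] at h
  have := MvPolynomial.monomial_left_injective (R := ℚ) one_ne_zero h
  have := congrArg (fun f => (Finsupp.equivFunOnFinite f : Fin d → ℕ)) this
  simpa using this

lemma xpow_ne_one (d : ℕ) (χ : Fin d → ℤ) (hχ : χ ≠ 0) : xpow d χ ≠ 1 := by
  intro h
  apply hχ
  set a : Fin d → ℕ := fun j => (χ j).toNat with ha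
  set b : Fin d → ℕ := fun j => (-χ j).toNat with hb
  have key : xpow d χ * xpow d (fun j => (b j : ℤ)) = xpow d (fun j => (a j : ℤ)) := by
    rw [← xpow_add]
    congr 1
    funext j
    simp only [Pi.add_apply, ha, hb]
    omega
  rw [h, one_mul, xpow_natpow, xpow_natpow] at key
  have hab : b = a := prod_X_pow_inj d b a
    (IsFractionRing.injective (MvPolynomial (Fin d) ℚ) (KK d) key)
  funext j
  have : b j = a j := congrFun hab j
  simp only [ha, hb] at this
  simp only [Pi.zero_apply]
  omega

lemma psiF_zero (d : ℕ) : psiF d 0 = 0 := by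
  simp [psiF, xpow_zero']

lemma psiF_add (d : ℕ) (χ₁ χ₂ : Fin d → ℤ) :
    psiF d (χ₁ + χ₂) = psiF d χ₁ + psiF d χ₂ := by
  have h1 := xpow_ne_zero d χ₁
  have h2 := xpow_ne_zero d χ₂
  rw [psiF, psiF, psiF, xpow_add, Derivation.leibniz, smul_add, smul_smul, smul_smul, mul_inv]
  rw [show (xpow d χ₁)⁻¹ * (xpow d χ₂)⁻¹ * xpow d χ₁ = (xpow d χ₂)⁻¹ by
    rw [mul_comm (xpow d χ₁)⁻¹ (xpow d χ₂)⁻¹, mul_assoc, inv_mul_cancel₀ h1, mul_one]]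
  rw [show (xpow d χ₁)⁻¹ * (xpow d χ₂)⁻¹ * xpow d χ₂ = (xpow d χ₁)⁻¹ by
    rw [mul_assoc, inv_mul_cancel₀ h2, mul_one]]
  exact add_comm _ _

lemma psiF_sum (d : ℕ) (A : Finset ℕ) (μ : ℕ → Fin d → ℤ) :
    psiF d (∑ i ∈ A, μ i) = ∑ i ∈ A, psiF d (μ i) := by
  induction A using Finset.cons_induction with
  | empty => simp [psiF_zero]
  | cons a s ha ih => rw [Finset.sum_cons, Finset.sum_cons, psiF_add, ih]

lemma psiF_neg (d : ℕ) (χ : Fin d → ℤ) : psiF d (-χ) = - psiF d χ := by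
  have := psiF_add d χ (-χ)
  rw [add_neg_cancel, psiF_zero] at this
  exact eq_neg_of_add_eq_zero_right this.symm

lemma omegaF_eq (d : ℕ) (χ : Fin d → ℤ) :
    omegaF d χ = (xpow d χ * (xpow d χ - 1)⁻¹) • psiF d χ := by
  have h0 := xpow_ne_zero d χ
  have hD : (KaehlerDifferential.D ℚ (KK d)) (xpow d χ) = (xpow d χ) • psiF d χ := by
    rw [psiF, smul_smul, mul_inv_cancel₀ h0, one_smul]
  rw [omegaF, map_sub, Derivation.map_one_eq_zero, zero_sub, hD, smul_neg, smul_smul, ← neg_smul]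
  congr 1
  rcases eq_or_ne (xpow d χ) 1 with h1 | h1
  · rw [h1]; simp
  · have ht1 : xpow d χ - 1 ≠ 0 := sub_ne_zero.mpr h1
    have ht1' : (1 : KK d) - xpow d χ ≠ 0 := fun h => h1 (sub_eq_zero.mp h).symm
    field_simp
    ring

lemma nsmul_to_K (d : ℕ) (x : ΩK d) : (2:ℕ) • x = (2:KK d) • x := by
  rw [← Nat.cast_smul_eq_nsmul (KK d) 2 x]
  norm_num

lemma combA (d : ℕ) (a : KK d) (x : ΩK d) : a • x - x + x = a • x := by abel

lemma combB (d : ℕ) (a : KK d) (x : ΩK d) : a • x - x + -x = (a - 2) • x := by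
  rw [sub_smul, two_smul]
  abel

lemma combC (d : ℕ) (a : KK d) (x : ΩK d) : -(a • x - x) + x = (2 - a) • x := by
  rw [sub_smul, two_smul]
  abel

lemma combD (d : ℕ) (a : KK d) (x : ΩK d) : -(a • x - x) + -x = (-a) • x := by
  rw [neg_smul]
  abel

lemma key1 (d : ℕ) (χ : Fin d → ℤ) (hχ : χ ≠ 0) (c : ℤ) (hc : c = 1 ∨ c = -1) :
    obarF d χ + c • psiF d χ
      = (2 * (xpow d (c • χ) * (xpow d (c • χ) - 1)⁻¹)) • psiF d (c • χ) := by
  have h0 := xpow_ne_zero d χ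
  have h1 := xpow_ne_one d χ hχ
  have hsub : xpow d χ - 1 ≠ 0 := sub_ne_zero.mpr h1
  have hsub2 : (xpow d χ)⁻¹ - 1 ≠ 0 := by
    intro h
    exact h1 (inv_eq_one.mp (by rwa [sub_eq_zero] at h))
  have hsub' : (1:KK d) - xpow d χ ≠ 0 := fun h => h1 (sub_eq_zero.mp h).symm
  rcases hc with rfl | rfl
  · simp only [one_smul]
    rw [obarF, omegaF_eq, nsmul_to_K, smul_smul, combA]
  · simp only [neg_one_zsmul]
    rw [psiF_neg, xpow_neg, obarF, omegaF_eq, nsmul_to_K, smul_smul, combB, smul_neg, ← neg_smul]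
    congr 1
    field_simp
    ring

lemma key2 (d : ℕ) (χ : Fin d → ℤ) (hχ : χ ≠ 0) (c : ℤ) (hc : c = 1 ∨ c = -1) :
    -obarF d χ + c • psiF d χ
      = -((2 * ((xpow d (c • χ) - 1)⁻¹)) • psiF d (c • χ)) := by
  have h0 := xpow_ne_zero d χ
  have h1 := xpow_ne_one d χ hχ
  have hsub : xpow d χ - 1 ≠ 0 := sub_ne_zero.mpr h1
  have hsub2 : (xpow d χ)⁻¹ - 1 ≠ 0 := by
    intro h
    exact h1 (inv_eq_one.mp (by rwa [sub_eq_zero] at h))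
  have hsub' : (1:KK d) - xpow d χ ≠ 0 := fun h => h1 (sub_eq_zero.mp h).symm
  rcases hc with rfl | rfl
  · simp only [one_smul]
    rw [obarF, omegaF_eq, nsmul_to_K, smul_smul, combC, ← neg_smul]
    congr 1
    field_simp
    ring
  · simp only [neg_one_zsmul]
    rw [psiF_neg, xpow_neg, obarF, omegaF_eq, nsmul_to_K, smul_smul, combD, smul_neg, neg_neg]
    congr 1
    field_simp
    ring

lemma wdg_mem_prod_zero (d : ℕ) (x : ΩK d) (l : List (ΩK d)) (hx : x ∈ l) :
    wdg d x * (l.map (wdg d)).prod = 0 := by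
  induction l with
  | nil => simp at hx
  | cons w tl ih =>
    rw [List.map_cons, List.prod_cons, ← mul_assoc]
    rcases List.mem_cons.mp hx with rfl | h
    · rw [show wdg d x * wdg d x = 0 from ExteriorAlgebra.ι_sq_zero x, zero_mul]
    · have hsw : wdg d x * wdg d w = -(wdg d w * wdg d x) :=
        eq_neg_of_add_eq_zero_left (ExteriorAlgebra.ι_add_mul_swap x w)
      rw [hsw, neg_mul, mul_assoc, ih h, mul_zero, neg_zero]

/-- Lemma `lm:signedeq`.
If `χ_0, …, χ_k ∈ ℤ^d` (k ≥ 1) are nonzero and `∑_{i=0}^k c_i χ_i = 0` with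
`c_i ∈ {1, −1}`, then `∏_{i=1}^k (ω̄_i + c_i ψ_i − ω̄_{i−1} + c_{i−1} ψ_{i−1}) = 0`. -/
theorem stmt_5 (d k : ℕ) (hk : 1 ≤ k) (χ : ℕ → Fin d → ℤ) (c : ℕ → ℤ)
    (hne : ∀ i ≤ k, χ i ≠ 0)
    (hc : ∀ i ≤ k, c i = 1 ∨ c i = -1)
    (hsum : ∑ i ∈ Finset.range (k+1), c i • χ i = 0) :
    oprod d (Finset.Icc 1 k) (fun i =>
        wdg d (obarF d (χ i) + c i • psiF d (χ i)
          - obarF d (χ (i - 1)) + c (i - 1) • psiF d (χ (i - 1)))) = 0 := by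
  classical
  set μ : ℕ → Fin d → ℤ := fun i => c i • χ i with hμdef
  set t : ℕ → KK d := fun i => xpow d (μ i) with htdef
  set β : ℕ → ΩK d := fun i => psiF d (μ i) with hβdef
  set lam : ℕ → KK d := fun i => 1 - ∏ j ∈ Finset.Icc i k, (t j)⁻¹ with hlamdef
  set v : ℕ → ΩK d := fun i =>
    obarF d (χ i) + c i • psiF d (χ i)
      - obarF d (χ (i - 1)) + c (i - 1) • psiF d (χ (i - 1)) with hvdef
  set F : ℕ → ΩK d := fun i => (2 * (lam (i+1) * (t i - 1)⁻¹)) • β i with hFdef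
  have hμsum : ∑ i ∈ Finset.range (k+1), μ i = 0 := hsum
  have hμne : ∀ i, i ≤ k → μ i ≠ 0 := by
    intro i hi
    have hci : c i ≠ 0 := by rcases hc i hi with h | h <;> simp [h]
    exact smul_ne_zero hci (hne i hi)
  have ht0 : ∀ i, t i ≠ 0 := fun i => xpow_ne_zero d (μ i)
  have ht1 : ∀ i, i ≤ k → t i ≠ 1 := fun i hi => xpow_ne_one d (μ i) (hμne i hi)
  have htsub : ∀ i, i ≤ k → t i - 1 ≠ 0 := fun i hi => sub_ne_zero.mpr (ht1 i hi)
  have hβsum : ∑ i ∈ Finset.range (k+1), β i = 0 := by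
    calc ∑ i ∈ Finset.range (k+1), β i
        = psiF d (∑ i ∈ Finset.range (k+1), μ i) := (psiF_sum d _ μ).symm
      _ = 0 := by rw [hμsum, psiF_zero]
  have hrange : Finset.Icc 0 k = Finset.range (k+1) := by
    rw [Finset.range_eq_Ico, Finset.Ico_add_one_right_eq_Icc]
  have hprodIcc : ∏ i ∈ Finset.Icc 1 k, (t i)⁻¹ = t 0 := by
    have h1 : ∏ i ∈ Finset.Icc 0 k, t i = 1 := by
      calc ∏ i ∈ Finset.Icc 0 k, t i
          = xpow d (∑ i ∈ Finset.Icc 0 k, μ i) := (xpow_sum d _ μ).symm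
        _ = 1 := by rw [hrange, hμsum, xpow_zero']
    have h2 : ∏ i ∈ Finset.Icc 0 k, t i = t 0 * ∏ i ∈ Finset.Icc 1 k, t i := by
      have h := Finset.prod_eq_prod_Ico_succ_bot (show 0 < k+1 by omega) t
      rw [← Finset.range_eq_Ico, ← hrange] at h
      rw [h, Finset.Ico_add_one_right_eq_Icc]
    have h3 : t 0 * ∏ i ∈ Finset.Icc 1 k, t i = 1 := h2.symm.trans h1
    rw [Finset.prod_inv_distrib, (inv_eq_of_mul_eq_one_right h3).symm, inv_inv]
  have hlam1 : lam 1 = 1 - t 0 := by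
    show 1 - ∏ j ∈ Finset.Icc 1 k, (t j)⁻¹ = 1 - t 0
    rw [hprodIcc]
  have hlam1ne : lam 1 ≠ 0 := by
    rw [hlam1]
    intro h
    exact (ht1 0 (by omega)) (sub_eq_zero.mp h).symm
  have hlamk1 : lam (k+1) = 0 := by
    show 1 - ∏ j ∈ Finset.Icc (k+1) k, (t j)⁻¹ = 0
    rw [Finset.Icc_eq_empty (by omega), Finset.prod_empty, sub_self]
  have hIccsplit : ∀ j, j ≤ k →
      ∏ i ∈ Finset.Icc j k, (t i)⁻¹ = (t j)⁻¹ * ∏ i ∈ Finset.Icc (j+1) k, (t i)⁻¹ := by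
    intro j hj
    have h := Finset.prod_eq_prod_Ico_succ_bot (show j < k+1 by omega) (fun i => (t i)⁻¹)
    rw [Finset.Ico_add_one_right_eq_Icc, Finset.Ico_add_one_right_eq_Icc] at h
    exact h
  have hvj : ∀ j, 1 ≤ j → j ≤ k →
      v j = (2 * (t j * (t j - 1)⁻¹)) • β j - (2 * ((t (j-1) - 1)⁻¹)) • β (j-1) := by
    intro j hj1 hjk
    show obarF d (χ j) + c j • psiF d (χ j)
        - obarF d (χ (j-1)) + c (j-1) • psiF d (χ (j-1)) = _
    rw [sub_eq_add_neg, add_assoc,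
      key1 d (χ j) (hne j hjk) (c j) (hc j hjk),
      key2 d (χ (j-1)) (hne (j-1) (by omega)) (c (j-1)) (hc (j-1) (by omega)),
      ← sub_eq_add_neg]
  have hstep : ∀ j, 1 ≤ j → j ≤ k → lam j • v j = 2 • β j + (F j - F (j-1)) := by
    intro j hj1 hjk
    rw [hvj j hj1 hjk, smul_sub, smul_smul, smul_smul]
    have hc1 : lam j * (2 * (t j * (t j - 1)⁻¹))
        = 2 + 2 * (lam (j+1) * (t j - 1)⁻¹) := by
      show (1 - ∏ i ∈ Finset.Icc j k, (t i)⁻¹) * _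
          = 2 + 2 * ((1 - ∏ i ∈ Finset.Icc (j+1) k, (t i)⁻¹) * _)
      rw [hIccsplit j hjk]
      have hQ : (∏ i ∈ Finset.Icc (j+1) k, t i) ≠ 0 :=
        Finset.prod_ne_zero_iff.mpr fun i _ => ht0 i
      simp only [Finset.prod_inv_distrib]
      field_simp [ht0 j, htsub j hjk, hQ]
      ring
    have hc2 : lam j * (2 * ((t (j-1) - 1)⁻¹))
        = 2 * (lam ((j-1)+1) * (t (j-1) - 1)⁻¹) := by
      rw [Nat.sub_add_cancel hj1]
      ring
    rw [hc1, hc2]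
    show _ = 2 • β j + ((2 * (lam (j+1) * (t j - 1)⁻¹)) • β j
      - (2 * (lam ((j-1)+1) * (t (j-1) - 1)⁻¹)) • β (j-1))
    rw [add_smul, nsmul_to_K]
    abel
  have hterm : ∀ i ∈ Finset.range k,
      lam (1+i) • v (1+i) = 2 • β (i+1) + (F (i+1) - F i) := by
    intro i hi
    have hi' := Finset.mem_range.mp hi
    have h := hstep (i+1) (by omega) (by omega)
    rw [Nat.add_comm 1 i]
    exact h
  have hS : ∑ i ∈ Finset.Icc 1 k, lam i • v i = 0 := by
    rw [← Finset.Ico_add_one_right_eq_Icc, Finset.sum_Ico_eq_sum_range]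
    rw [show k + 1 - 1 = k from rfl]
    rw [Finset.sum_congr rfl hterm, Finset.sum_add_distrib, Finset.sum_range_sub F]
    have hFk : F k = 0 := by
      show (2 * (lam (k+1) * (t k - 1)⁻¹)) • β k = 0
      rw [hlamk1]
      simp
    have hF0 : F 0 = (-(2:KK d)) • β 0 := by
      show (2 * (lam (0+1) * (t 0 - 1)⁻¹)) • β 0 = _
      congr 1
      rw [show (0+1) = 1 from rfl, hlam1,
        show (1:KK d) - t 0 = -(t 0 - 1) from by ring, neg_mul,
        mul_inv_cancel₀ (htsub 0 (by omega))]
      ring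
    rw [hFk, hF0, ← Finset.smul_sum]
    have h5 : ∑ i ∈ Finset.range k, β (i+1) = - β 0 := by
      have h6 := Finset.sum_range_succ' β k
      rw [hβsum] at h6
      exact eq_neg_of_add_eq_zero_left h6.symm
    rw [h5, nsmul_to_K, smul_neg, neg_smul]
    abel
  have hsplitsum : lam 1 • v 1 + ∑ i ∈ Finset.Icc 2 k, lam i • v i = 0 := by
    rw [← Finset.Ico_add_one_right_eq_Icc] at hS
    rw [Finset.sum_eq_sum_Ico_succ_bot (show 1 < k+1 by omega)] at hS
    rw [show (1:ℕ)+1 = 2 from rfl, Finset.Ico_add_one_right_eq_Icc] at hS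
    exact hS
  have hv1 : v 1 = ∑ i ∈ Finset.Icc 2 k, ((-(lam 1)⁻¹) * lam i) • v i := by
    calc v 1 = (lam 1)⁻¹ • (lam 1 • v 1) := by
          rw [smul_smul, inv_mul_cancel₀ hlam1ne, one_smul]
      _ = (lam 1)⁻¹ • (- ∑ i ∈ Finset.Icc 2 k, lam i • v i) := by
          rw [eq_neg_of_add_eq_zero_left hsplitsum]
      _ = ∑ i ∈ Finset.Icc 2 k, ((-(lam 1)⁻¹) * lam i) • v i := by
          rw [smul_neg, Finset.smul_sum, ← Finset.sum_neg_distrib]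
          refine Finset.sum_congr rfl fun i _ => ?_
          rw [smul_smul, ← neg_smul, neg_mul]
  have hsplitset : Finset.Icc 1 k = insert 1 (Finset.Icc 2 k) := by
    ext i
    simp only [Finset.mem_Icc, Finset.mem_insert]
    omega
  have h1notin : (1:ℕ) ∉ Finset.Icc 2 k := by simp
  have hle2 : ∀ b ∈ Finset.Icc 2 k, 1 ≤ b := by
    intro b hb
    rw [Finset.mem_Icc] at hb
    omega
  have hPzero : ∀ i ∈ Finset.Icc 2 k,
      wdg d (v i) * (((Finset.Icc 2 k).sort (· ≤ ·)).map (fun j => wdg d (v j))).prod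
        = 0 := by
    intro i hi
    have hmem : v i ∈ ((Finset.Icc 2 k).sort (· ≤ ·)).map v :=
      List.mem_map_of_mem (f := v) ((Finset.mem_sort _).mpr hi)
    have h := wdg_mem_prod_zero d (v i) _ hmem
    rw [List.map_map] at h
    exact h
  show oprod d (Finset.Icc 1 k) (fun i => wdg d (v i)) = 0
  rw [oprod, hsplitset, Finset.sort_insert (r := (· ≤ ·)) hle2 h1notin, List.map_cons,
    List.prod_cons]
  show wdg d (v 1)
    * (((Finset.Icc 2 k).sort (· ≤ ·)).map (fun j => wdg d (v j))).prod = 0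
  rw [hv1]
  show (ExteriorAlgebra.ι (KK d)) (∑ i ∈ Finset.Icc 2 k, ((-(lam 1)⁻¹) * lam i) • v i)
    * (((Finset.Icc 2 k).sort (· ≤ ·)).map (fun j => wdg d (v j))).prod = 0
  rw [map_sum, Finset.sum_mul]
  refine Finset.sum_eq_zero fun i hi => ?_
  rw [LinearMap.map_smul, smul_mul_assoc]
  rw [show ((ExteriorAlgebra.ι (KK d)) (v i) : ExtK d) = wdg d (v i) from rfl]
  rw [hPzero i hi, smul_zero]
end
end

section
/- Suppose χ_0, χ_1, …, χ_k ∈ ℤ^d (k ≥ 1) are nonzero and ∑_{i=0}^k c_i χ_i = 0 for some signs c_0, …, c_k ∈ {1, −1}; set C = {0,…,k}. Then ∑_{j ∈ C} ∑_{(A,B), |B| odd} (−1)^{#{a ∈ A : a < j}} c_B · η̄_{A,B} = 0, where the inner sum is over all pairs of disjoint sets A, B with A ⊔ B = C∖{j} and |B| odd, c_B := ∏_{i ∈ B} c_i, and η̄_{A,B} denotes the wedge product over i ∈ A ∪ B, taken in increasing order of i, of ω̄_i when i ∈ A and ψ_i when i ∈ B. -/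
open scoped BigOperators

noncomputable section

set_option synthInstance.maxHeartbeats 1000000
set_option maxHeartbeats 1000000

namespace Stmt8

variable {d : ℕ}

lemma algX_ne_zero (j : Fin d) :
    (algebraMap (MvPolynomial (Fin d) ℚ) (KK d)) (MvPolynomial.X j) ≠ 0 :=
  (map_ne_zero_iff _ (IsFractionRing.injective (MvPolynomial (Fin d) ℚ) (KK d))).2
    (MvPolynomial.X_ne_zero j)

lemma xpow_ne_zero (χ : Fin d → ℤ) : xpow d χ ≠ 0 := by
  unfold xpow
  rw [Finset.prod_ne_zero_iff]
  exact fun j _ => zpow_ne_zero _ (algX_ne_zero j)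

lemma D_xpow (χ : Fin d → ℤ) :
    (KaehlerDifferential.D ℚ (KK d)) (xpow d χ) = xpow d χ • psiF d χ := by
  unfold psiF
  rw [smul_smul, mul_inv_cancel₀ (xpow_ne_zero χ), one_smul]

lemma obar_eq (χ : Fin d → ℤ) : ∃ g : KK d, obarF d χ = g • psiF d χ := by
  by_cases h : (1 : KK d) - xpow d χ = 0
  · refine ⟨-1, ?_⟩
    unfold obarF omegaF
    rw [h, inv_zero, zero_smul, smul_zero, zero_sub, neg_one_smul]
  · refine ⟨-(2 * (1 - xpow d χ)⁻¹ * xpow d χ) - 1, ?_⟩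
    unfold obarF omegaF
    rw [map_sub, Derivation.map_one_eq_zero, D_xpow, two_smul, zero_sub, smul_neg, smul_smul,
      sub_smul, one_smul, neg_smul]
    have h2 : (2 * (1 - xpow d χ)⁻¹ * xpow d χ)
        = (1 - xpow d χ)⁻¹ * xpow d χ + (1 - xpow d χ)⁻¹ * xpow d χ := by ring
    rw [h2, add_smul]
    abel

lemma xpow_add (χ₁ χ₂ : Fin d → ℤ) : xpow d (χ₁ + χ₂) = xpow d χ₁ * xpow d χ₂ := by
  unfold xpow
  rw [← Finset.prod_mul_distrib]
  exact Finset.prod_congr rfl fun j _ => by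
    simpa using zpow_add₀ (algX_ne_zero j) (χ₁ j) (χ₂ j)

lemma xpow_zero' : xpow d (0 : Fin d → ℤ) = 1 := by
  unfold xpow; simp

lemma psi_add (χ₁ χ₂ : Fin d → ℤ) : psiF d (χ₁ + χ₂) = psiF d χ₁ + psiF d χ₂ := by
  have h₁ := xpow_ne_zero χ₁
  have h₂ := xpow_ne_zero χ₂
  unfold psiF
  rw [xpow_add, Derivation.leibniz, smul_add, smul_smul, smul_smul]
  have e1 : (xpow d χ₁ * xpow d χ₂)⁻¹ * xpow d χ₁ = (xpow d χ₂)⁻¹ := by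
    field_simp
  have e2 : (xpow d χ₁ * xpow d χ₂)⁻¹ * xpow d χ₂ = (xpow d χ₁)⁻¹ := by
    field_simp
  rw [e1, e2, add_comm]

lemma psi_zero' : psiF d (0 : Fin d → ℤ) = 0 := by
  unfold psiF
  rw [xpow_zero', Derivation.map_one_eq_zero, smul_zero]

def psiHom (d : ℕ) : (Fin d → ℤ) →+ ΩK d :=
  AddMonoidHom.mk' (psiF d) (fun a b => psi_add a b)

lemma wdg_anticomm (a b : ΩK d) : wdg d a * wdg d b = -(wdg d b * wdg d a) := by
  have h := ExteriorAlgebra.ι_sq_zero (R := KK d) (M := ΩK d) (a + b)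
  rw [map_add, add_mul, mul_add, mul_add, ExteriorAlgebra.ι_sq_zero,
    ExteriorAlgebra.ι_sq_zero, zero_add, add_zero] at h
  exact eq_neg_of_add_eq_zero_left h

end Stmt8

namespace Stmt8

lemma neg_one_pow_mul_comm {M : Type*} [Ring M] (n : ℕ) (a b : M) :
    a * ((-1 : M) ^ n * b) = (-1 : M) ^ n * (a * b) := by
  rcases Nat.even_or_odd n with h | h
  · rw [h.neg_one_pow, one_mul, one_mul]
  · rw [h.neg_one_pow, neg_one_mul, neg_one_mul, mul_neg]

lemma anticomm_mul_list {M : Type*} [Ring M] (W : ℕ → M)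
    (hcomm : ∀ i j, W i * W j = -(W j * W i)) (l : List ℕ) (i : ℕ) :
    W i * (l.map W).prod = (-1 : M) ^ l.length * ((l.map W).prod * W i) := by
  induction l with
  | nil => simp
  | cons a t ih =>
    rw [List.map_cons, List.prod_cons, ← mul_assoc, hcomm i a, neg_mul, mul_assoc, ih,
      neg_one_pow_mul_comm, List.length_cons, pow_succ, mul_assoc ((-1 : M) ^ t.length),
      neg_one_mul, mul_neg, mul_assoc]

lemma mem_mul_list_prod_zero {M : Type*} [Ring M] (W : ℕ → M)
    (hcomm : ∀ i j, W i * W j = -(W j * W i)) (hsq : ∀ i, W i * W i = 0)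
    (l : List ℕ) (i : ℕ) (h : i ∈ l) : W i * (l.map W).prod = 0 := by
  induction l with
  | nil => simp at h
  | cons a t ih =>
    rw [List.map_cons, List.prod_cons, ← mul_assoc]
    rcases List.mem_cons.1 h with rfl | h'
    · rw [hsq, zero_mul]
    · rw [hcomm i a, neg_mul, mul_assoc, ih h', mul_zero, neg_zero]

lemma list_smul_prod {R M : Type*} [CommSemiring R] [Semiring M] [Algebra R M]
    (l : List ℕ) (h : ℕ → R) (F : ℕ → M) :
    (l.map (fun i => h i • F i)).prod = ((l.map h).prod) • (l.map F).prod := by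
  induction l with
  | nil => simp
  | cons a t ih =>
    rw [List.map_cons, List.prod_cons, ih, List.map_cons, List.prod_cons,
      List.map_cons, List.prod_cons, smul_mul_assoc, mul_smul_comm, smul_smul]

lemma sort_map_prod {M : Type*} [CommMonoid M] (A : Finset ℕ) (h : ℕ → M) :
    ((A.sort (· ≤ ·)).map h).prod = ∏ i ∈ A, h i := by
  rw [Finset.prod_eq_multiset_prod, ← Finset.sort_eq A (· ≤ ·), Multiset.map_coe,
    Multiset.prod_coe]

lemma oprod_congr {d : ℕ} (A : Finset ℕ) (f f' : ℕ → ExtK d) (h : ∀ i ∈ A, f i = f' i) :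
    oprod d A f = oprod d A f' := by
  unfold oprod
  congr 1
  exact List.map_congr_left fun a ha => h a ((Finset.mem_sort (· ≤ ·)).1 ha)

lemma oprod_smul {d : ℕ} (A : Finset ℕ) (h : ℕ → KK d) (F : ℕ → ExtK d) :
    oprod d A (fun i => h i • F i) = (∏ i ∈ A, h i) • oprod d A F := by
  unfold oprod
  rw [list_smul_prod, sort_map_prod]

lemma sort_erase (k j : ℕ) (hj : j < k + 1) :
    ((Finset.range (k+1)).erase j).sort (· ≤ ·) = List.range j ++ List.range' (j+1) (k - j) := by
  refine List.Perm.eq_of_pairwise' (Finset.pairwise_sort _ _) ?_ ?_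
  swap
  · refine List.perm_of_nodup_nodup_toFinset_eq (Finset.sort_nodup _ _) ?_ ?_
    · rw [List.nodup_append]
      refine ⟨List.nodup_range, List.nodup_range' 1, fun a ha b hb => ?_⟩
      rw [List.mem_range] at ha
      rw [List.mem_range'_1] at hb
      omega
    · rw [Finset.sort_toFinset]
      ext a
      simp only [List.toFinset_append, Finset.mem_union, List.mem_toFinset, List.mem_range,
        List.mem_range'_1, Finset.mem_erase, Finset.mem_range]
      omega
  · rw [List.pairwise_append]
    refine ⟨List.pairwise_le_range, List.pairwise_le_range' 1, fun a ha b hb => ?_⟩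
    rw [List.mem_range] at ha
    rw [List.mem_range'_1] at hb
    omega

lemma telescope {R : Type*} [CommRing R] (n : ℕ) (u v : ℕ → R) :
    ∑ j ∈ Finset.range n,
        (u j - v j) * ((∏ i ∈ Finset.range j, v i) * ∏ i ∈ Finset.Ico (j+1) n, u i)
      = ∏ i ∈ Finset.range n, u i - ∏ i ∈ Finset.range n, v i := by
  have key : ∀ j ∈ Finset.range n,
      (u j - v j) * ((∏ i ∈ Finset.range j, v i) * ∏ i ∈ Finset.Ico (j+1) n, u i)
      = (fun j => (∏ i ∈ Finset.range j, v i) * ∏ i ∈ Finset.Ico j n, u i) j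
        - (fun j => (∏ i ∈ Finset.range j, v i) * ∏ i ∈ Finset.Ico j n, u i) (j+1) := by
    intro j hj
    rw [Finset.mem_range] at hj
    simp only []
    rw [Finset.prod_eq_prod_Ico_succ_bot hj, Finset.prod_range_succ]
    ring
  rw [Finset.sum_congr rfl key,
    Finset.sum_range_sub' (fun j => (∏ i ∈ Finset.range j, v i) * ∏ i ∈ Finset.Ico j n, u i) n]
  simp [Nat.Ico_zero_eq_range, Finset.Ico_self]

lemma prod_neg' {R : Type*} [CommRing R] (s : Finset ℕ) (q : ℕ → R) :
    ∏ i ∈ s, (-q i) = (-1 : R) ^ s.card * ∏ i ∈ s, q i := by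
  calc ∏ i ∈ s, (-q i) = ∏ i ∈ s, ((-1) * q i) := by simp only [neg_one_mul]
    _ = (∏ _i ∈ s, (-1 : R)) * ∏ i ∈ s, q i := Finset.prod_mul_distrib
    _ = _ := by rw [Finset.prod_const]

lemma expand_odd {R : Type*} [CommRing R] (s : Finset ℕ) (f q : ℕ → R) :
    ∏ i ∈ s, (f i + q i) - ∏ i ∈ s, (f i - q i)
      = 2 * ∑ A ∈ s.powerset.filter (fun A => Odd ((s \ A).card)),
          (∏ i ∈ A, f i) * ∏ i ∈ s \ A, q i := by
  have h1 : ∏ i ∈ s, (f i - q i)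
      = ∑ A ∈ s.powerset, (∏ i ∈ A, f i) * ((-1 : R) ^ ((s \ A).card) * ∏ i ∈ s \ A, q i) := by
    calc ∏ i ∈ s, (f i - q i) = ∏ i ∈ s, (f i + (-q i)) := by simp only [sub_eq_add_neg]
      _ = ∑ A ∈ s.powerset, (∏ i ∈ A, f i) * ∏ i ∈ s \ A, (-q i) := Finset.prod_add _ _ _
      _ = _ := Finset.sum_congr rfl fun A _ => by rw [prod_neg']
  rw [Finset.prod_add, h1, ← Finset.sum_sub_distrib,
    ← Finset.sum_filter_add_sum_filter_not s.powerset (fun A => Odd ((s \ A).card))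
      (fun A => (∏ i ∈ A, f i) * ∏ i ∈ s \ A, q i
        - (∏ i ∈ A, f i) * ((-1 : R) ^ ((s \ A).card) * ∏ i ∈ s \ A, q i))]
  have hzero : ∑ A ∈ s.powerset.filter (fun A => ¬ Odd ((s \ A).card)),
      ((∏ i ∈ A, f i) * ∏ i ∈ s \ A, q i
        - (∏ i ∈ A, f i) * ((-1 : R) ^ ((s \ A).card) * ∏ i ∈ s \ A, q i)) = 0 :=
    Finset.sum_eq_zero fun A hA => by
      have he : Even ((s \ A).card) := Nat.not_odd_iff_even.1 (Finset.mem_filter.1 hA).2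
      rw [he.neg_one_pow, one_mul, sub_self]
  rw [hzero, add_zero, Finset.mul_sum]
  refine Finset.sum_congr rfl fun A hA => ?_
  have ho : Odd ((s \ A).card) := (Finset.mem_filter.1 hA).2
  rw [ho.neg_one_pow]
  ring

end Stmt8

namespace Stmt8

lemma stepA_lemma (d k : ℕ) (χ : ℕ → Fin d → ℤ) (g : ℕ → KK d) (j : ℕ) (A : Finset ℕ)
    (hgw : ∀ i, wdg d (obarF d (χ i)) = g i • wdg d (psiF d (χ i)))
    (c : ℕ → ℤ) (hA : A ⊆ (Finset.range (k+1)).erase j) :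
    (((-1 : ℤ) ^ ((A.filter (fun a => a < j)).card)) *
        ∏ i ∈ ((Finset.range (k+1)).erase j) \ A, c i) •
        oprod d ((Finset.range (k+1)).erase j)
          (fun i => if i ∈ A then wdg d (obarF d (χ i)) else wdg d (psiF d (χ i)))
      = ((((-1 : KK d) ^ ((A.filter (fun a => a < j)).card)) *
            ∏ i ∈ ((Finset.range (k+1)).erase j) \ A, (c i : KK d)) * ∏ i ∈ A, g i)
          • oprod d ((Finset.range (k+1)).erase j) (fun i => wdg d (psiF d (χ i))) := by
  have h1 : oprod d ((Finset.range (k+1)).erase j)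
      (fun i => if i ∈ A then wdg d (obarF d (χ i)) else wdg d (psiF d (χ i)))
      = oprod d ((Finset.range (k+1)).erase j)
          (fun i => (if i ∈ A then g i else 1) • wdg d (psiF d (χ i))) := by
    refine oprod_congr _ _ _ fun i hi => ?_
    by_cases hiA : i ∈ A
    · simp only [hiA, if_true]
      exact hgw i
    · simp only [hiA, if_false, one_smul]
  rw [h1, oprod_smul ((Finset.range (k+1)).erase j) (fun i => if i ∈ A then g i else 1)
      (fun i => wdg d (psiF d (χ i))), Finset.prod_ite_mem ((Finset.range (k+1)).erase j) A g,
    Finset.inter_eq_right.2 hA, ← Int.cast_smul_eq_zsmul (KK d), smul_smul]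
  congr 1
  push_cast
  ring

lemma Psi_lemma (d k : ℕ) (W : ℕ → ExtK d) (cc : ℕ → KK d)
    (hcomm : ∀ i j, W i * W j = -(W j * W i)) (hsq : ∀ i, W i * W i = 0)
    (hc0 : cc 0 * cc 0 = 1)
    (hrel : ∑ i ∈ Finset.range (k+1), cc i • W i = 0)
    (j : ℕ) (hj : j < k + 1) :
    oprod d ((Finset.range (k+1)).erase j) W
      = ((-1 : KK d) ^ j * cc 0 * cc j) • oprod d ((Finset.range (k+1)).erase 0) W := by
  have hΨ0 : oprod d ((Finset.range (k+1)).erase 0) W = (List.map W (List.range' 1 k)).prod := by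
    unfold oprod
    rw [sort_erase k 0 (by omega)]
    simp
  rcases Nat.eq_zero_or_pos j with rfl | hpos
  · rw [pow_zero, one_mul, hc0, one_smul]
  obtain ⟨m, rfl⟩ : ∃ m, j = m + 1 := ⟨j - 1, by omega⟩
  have hs1 : ((Finset.range (k+1)).erase (m+1)).sort (· ≤ ·)
      = (0 :: List.range' 1 m) ++ List.range' (m+2) (k - (m+1)) := by
    rw [sort_erase k (m+1) hj]
    congr 1
    rw [List.range_eq_range']
    simpa using List.range'_succ (s := 0) (n := m) (step := 1)
  have hΨj : oprod d ((Finset.range (k+1)).erase (m+1)) W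
      = (W 0 * (List.map W (List.range' 1 m)).prod)
          * (List.map W (List.range' (m+2) (k - (m+1)))).prod := by
    unfold oprod
    rw [hs1, List.map_append, List.prod_append, List.map_cons, List.prod_cons]
  have hw0 : W 0 = (-(cc 0)) • ∑ i ∈ Finset.range k, cc (i+1) • W (i+1) := by
    have h := hrel
    rw [Finset.sum_range_succ'] at h
    have h0 : cc 0 • W 0 = -∑ i ∈ Finset.range k, cc (i+1) • W (i+1) :=
      eq_neg_of_add_eq_zero_right h
    calc W 0 = (cc 0 * cc 0) • W 0 := by rw [hc0, one_smul]
      _ = cc 0 • (cc 0 • W 0) := by rw [mul_smul]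
      _ = cc 0 • (-∑ i ∈ Finset.range k, cc (i+1) • W (i+1)) := by rw [h0]
      _ = _ := by rw [smul_neg, ← neg_smul]
  rw [hΨj, hw0, smul_mul_assoc, smul_mul_assoc, Finset.sum_mul, Finset.sum_mul]
  have hterm : ∀ i ∈ Finset.range k, i ≠ m →
      (cc (i+1) • W (i+1) * (List.map W (List.range' 1 m)).prod)
          * (List.map W (List.range' (m+2) (k - (m+1)))).prod = 0 := by
    intro i hi him
    rw [Finset.mem_range] at hi
    rw [smul_mul_assoc, smul_mul_assoc, mul_assoc, ← List.prod_append, ← List.map_append,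
      mem_mul_list_prod_zero W hcomm hsq _ _ ?_, smul_zero]
    simp only [List.mem_append, List.mem_range'_1]
    omega
  rw [Finset.sum_eq_single_of_mem m (Finset.mem_range.2 (by omega)) hterm]
  rw [smul_mul_assoc, smul_mul_assoc]
  have hmove : W (m+1) * (List.map W (List.range' 1 m)).prod
      = (-1 : ExtK d) ^ m * ((List.map W (List.range' 1 m)).prod * W (m+1)) := by
    simpa [List.length_range'] using anticomm_mul_list W hcomm (List.range' 1 m) (m+1)
  rw [hmove, mul_assoc, mul_assoc]
  have hcons : W (m+1) * (List.map W (List.range' (m+2) (k - (m+1)))).prod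
      = (List.map W (List.range' (m+1) (k - m))).prod := by
    have hl : List.range' (m+1) (k - m) = (m+1) :: List.range' (m+2) (k - (m+1)) := by
      rw [show k - m = (k - (m+1)) + 1 from by omega]
      simpa using List.range'_succ (s := m+1) (n := k - (m+1)) (step := 1)
    rw [hl, List.map_cons, List.prod_cons]
  rw [hcons, ← List.prod_append, ← List.map_append]
  have happ : List.range' 1 m ++ List.range' (m+1) (k - m) = List.range' 1 k := by
    have h := List.range'_append (s := 1) (m := m) (n := k - m) (step := 1)
    rw [show 1 + 1 * m = m + 1 from by ring, show m + (k - m) = k from by omega] at h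
    exact h
  rw [happ, hΨ0]
  have hsc : ((-1 : ExtK d)) ^ m * ((List.map W (List.range' 1 k)).prod)
      = ((-1 : KK d) ^ m) • ((List.map W (List.range' 1 k)).prod) := by
    rw [Algebra.smul_def, map_pow, map_neg, map_one]
  rw [hsc, smul_smul, smul_smul]
  congr 1
  ring

lemma key_lemma {R : Type*} [Field R] [CharZero R] (k : ℕ) (g cc : ℕ → R) :
    ∑ j ∈ Finset.range (k+1),
      (∑ A ∈ ((Finset.range (k+1)).erase j).powerset.filter
          (fun A => Odd ((((Finset.range (k+1)).erase j) \ A).card)),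
          ((((-1 : R) ^ ((A.filter (fun a => a < j)).card))
            * ∏ i ∈ ((Finset.range (k+1)).erase j) \ A, cc i) * ∏ i ∈ A, g i))
        * ((-1 : R) ^ j * cc 0 * cc j) = 0 := by
  classical
  obtain ⟨u, hu⟩ : ∃ u : ℕ → R, u = fun i => g i + cc i := ⟨_, rfl⟩
  obtain ⟨v, hv⟩ : ∃ v : ℕ → R, v = fun i => g i - cc i := ⟨_, rfl⟩
  have main : ∀ j ∈ Finset.range (k+1),
      4 * ((∑ A ∈ ((Finset.range (k+1)).erase j).powerset.filter
          (fun A => Odd ((((Finset.range (k+1)).erase j) \ A).card)),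
          ((((-1 : R) ^ ((A.filter (fun a => a < j)).card))
            * ∏ i ∈ ((Finset.range (k+1)).erase j) \ A, cc i) * ∏ i ∈ A, g i))
        * ((-1 : R) ^ j * cc 0 * cc j))
      = cc 0 * ((2 * cc j) *
          ((∏ i ∈ Finset.range j, v i) * (∏ i ∈ Finset.Ico (j+1) (k+1), u i)
            - (∏ i ∈ Finset.range j, u i) * (∏ i ∈ Finset.Ico (j+1) (k+1), v i))) := by
    intro j hjC
    have hj : j < k + 1 := Finset.mem_range.1 hjC
    have hsplit : (Finset.range (k+1)).erase j = Finset.range j ∪ Finset.Ico (j+1) (k+1) := by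
      ext a
      simp only [Finset.mem_erase, Finset.mem_range, Finset.mem_union, Finset.mem_Ico]
      omega
    have hdisj : Disjoint (Finset.range j) (Finset.Ico (j+1) (k+1)) := by
      rw [Finset.disjoint_left]
      intro a ha hb
      rw [Finset.mem_range] at ha
      rw [Finset.mem_Ico] at hb
      omega
    obtain ⟨fj, hfj⟩ : ∃ fj : ℕ → R,
        fj = fun i => (if i < j then (-1 : R) else 1) * g i := ⟨_, rfl⟩
    have hfA : ∀ A : Finset ℕ,
        ∏ i ∈ A, fj i = (-1 : R) ^ ((A.filter (fun a => a < j)).card) * ∏ i ∈ A, g i := by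
      intro A
      simp only [hfj]
      rw [Finset.prod_mul_distrib, Finset.prod_ite, Finset.prod_const,
        Finset.prod_const_one, mul_one]
    have hEj : 2 * (∑ A ∈ ((Finset.range (k+1)).erase j).powerset.filter
          (fun A => Odd ((((Finset.range (k+1)).erase j) \ A).card)),
          ((((-1 : R) ^ ((A.filter (fun a => a < j)).card))
            * ∏ i ∈ ((Finset.range (k+1)).erase j) \ A, cc i) * ∏ i ∈ A, g i))
        = ∏ i ∈ (Finset.range (k+1)).erase j, (fj i + cc i)
          - ∏ i ∈ (Finset.range (k+1)).erase j, (fj i - cc i) := by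
      rw [expand_odd ((Finset.range (k+1)).erase j) fj cc]
      congr 1
      refine Finset.sum_congr rfl fun A hA => ?_
      rw [hfA A]
      ring
    have hP : ∏ i ∈ (Finset.range (k+1)).erase j, (fj i + cc i)
        = (-1 : R) ^ j
          * ((∏ i ∈ Finset.range j, v i) * ∏ i ∈ Finset.Ico (j+1) (k+1), u i) := by
      rw [hsplit, Finset.prod_union hdisj]
      have h1 : ∏ i ∈ Finset.range j, (fj i + cc i) = ∏ i ∈ Finset.range j, -(v i) := by
        refine Finset.prod_congr rfl fun i hi => ?_
        rw [Finset.mem_range] at hi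
        simp only [hfj, hv, if_pos hi]
        ring
      have h2 : ∏ i ∈ Finset.Ico (j+1) (k+1), (fj i + cc i)
          = ∏ i ∈ Finset.Ico (j+1) (k+1), u i := by
        refine Finset.prod_congr rfl fun i hi => ?_
        rw [Finset.mem_Ico] at hi
        simp only [hfj, hu, if_neg (by omega : ¬ i < j)]
        ring
      rw [h1, h2, prod_neg', Finset.card_range, mul_assoc]
    have hQ : ∏ i ∈ (Finset.range (k+1)).erase j, (fj i - cc i)
        = (-1 : R) ^ j
          * ((∏ i ∈ Finset.range j, u i) * ∏ i ∈ Finset.Ico (j+1) (k+1), v i) := by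
      rw [hsplit, Finset.prod_union hdisj]
      have h1 : ∏ i ∈ Finset.range j, (fj i - cc i) = ∏ i ∈ Finset.range j, -(u i) := by
        refine Finset.prod_congr rfl fun i hi => ?_
        rw [Finset.mem_range] at hi
        simp only [hfj, hu, if_pos hi]
        ring
      have h2 : ∏ i ∈ Finset.Ico (j+1) (k+1), (fj i - cc i)
          = ∏ i ∈ Finset.Ico (j+1) (k+1), v i := by
        refine Finset.prod_congr rfl fun i hi => ?_
        rw [Finset.mem_Ico] at hi
        simp only [hfj, hv, if_neg (by omega : ¬ i < j)]
        ring
      rw [h1, h2, prod_neg', Finset.card_range, mul_assoc]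
    have hsq2 : (-1 : R) ^ j * (-1 : R) ^ j = 1 := by
      rw [← pow_add]
      exact Even.neg_one_pow ⟨j, rfl⟩
    have h2 : 4 * ((∑ A ∈ ((Finset.range (k+1)).erase j).powerset.filter
          (fun A => Odd ((((Finset.range (k+1)).erase j) \ A).card)),
          ((((-1 : R) ^ ((A.filter (fun a => a < j)).card))
            * ∏ i ∈ ((Finset.range (k+1)).erase j) \ A, cc i) * ∏ i ∈ A, g i))
        * ((-1 : R) ^ j * cc 0 * cc j))
        = 2 * ((2 * (∑ A ∈ ((Finset.range (k+1)).erase j).powerset.filter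
            (fun A => Odd ((((Finset.range (k+1)).erase j) \ A).card)),
            ((((-1 : R) ^ ((A.filter (fun a => a < j)).card))
              * ∏ i ∈ ((Finset.range (k+1)).erase j) \ A, cc i) * ∏ i ∈ A, g i)))
          * ((-1 : R) ^ j * cc 0 * cc j)) := by ring
    rw [h2, hEj, hP, hQ]
    linear_combination (2 * cc 0 * cc j *
      ((∏ i ∈ Finset.range j, v i) * (∏ i ∈ Finset.Ico (j+1) (k+1), u i)
        - (∏ i ∈ Finset.range j, u i) * (∏ i ∈ Finset.Ico (j+1) (k+1), v i))) * hsq2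
  have hsum4 : 4 * (∑ j ∈ Finset.range (k+1),
      (∑ A ∈ ((Finset.range (k+1)).erase j).powerset.filter
          (fun A => Odd ((((Finset.range (k+1)).erase j) \ A).card)),
          ((((-1 : R) ^ ((A.filter (fun a => a < j)).card))
            * ∏ i ∈ ((Finset.range (k+1)).erase j) \ A, cc i) * ∏ i ∈ A, g i))
        * ((-1 : R) ^ j * cc 0 * cc j)) = 0 := by
    rw [Finset.mul_sum, Finset.sum_congr rfl main, ← Finset.mul_sum]
    have e1 : ∑ j ∈ Finset.range (k+1), (2 * cc j) *
        ((∏ i ∈ Finset.range j, v i) * ∏ i ∈ Finset.Ico (j+1) (k+1), u i)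
        = ∏ i ∈ Finset.range (k+1), u i - ∏ i ∈ Finset.range (k+1), v i := by
      rw [← telescope (k+1) u v]
      refine Finset.sum_congr rfl fun j hj => ?_
      have huv : u j - v j = 2 * cc j := by simp only [hu, hv]; ring
      rw [huv]
    have e2 : ∑ j ∈ Finset.range (k+1), (2 * cc j) *
        ((∏ i ∈ Finset.range j, u i) * ∏ i ∈ Finset.Ico (j+1) (k+1), v i)
        = ∏ i ∈ Finset.range (k+1), u i - ∏ i ∈ Finset.range (k+1), v i := by
      have h := telescope (k+1) v u
      calc ∑ j ∈ Finset.range (k+1), (2 * cc j) *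
            ((∏ i ∈ Finset.range j, u i) * ∏ i ∈ Finset.Ico (j+1) (k+1), v i)
          = ∑ j ∈ Finset.range (k+1), -((v j - u j) *
            ((∏ i ∈ Finset.range j, u i) * ∏ i ∈ Finset.Ico (j+1) (k+1), v i)) := by
            refine Finset.sum_congr rfl fun j hj => ?_
            simp only [hu, hv]
            ring
        _ = -∑ j ∈ Finset.range (k+1), (v j - u j) *
            ((∏ i ∈ Finset.range j, u i) * ∏ i ∈ Finset.Ico (j+1) (k+1), v i) :=
            Finset.sum_neg_distrib _
        _ = -(∏ i ∈ Finset.range (k+1), v i - ∏ i ∈ Finset.range (k+1), u i) := by rw [h]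
        _ = _ := by ring
    calc cc 0 * ∑ j ∈ Finset.range (k+1), (2 * cc j) *
          ((∏ i ∈ Finset.range j, v i) * (∏ i ∈ Finset.Ico (j+1) (k+1), u i)
            - (∏ i ∈ Finset.range j, u i) * (∏ i ∈ Finset.Ico (j+1) (k+1), v i))
        = cc 0 * (∑ j ∈ Finset.range (k+1), (2 * cc j) *
            ((∏ i ∈ Finset.range j, v i) * ∏ i ∈ Finset.Ico (j+1) (k+1), u i)
          - ∑ j ∈ Finset.range (k+1), (2 * cc j) *
            ((∏ i ∈ Finset.range j, u i) * ∏ i ∈ Finset.Ico (j+1) (k+1), v i)) := by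
          rw [← Finset.sum_sub_distrib]
          congr 1
          refine Finset.sum_congr rfl fun j hj => ?_
          ring
      _ = 0 := by rw [e1, e2, sub_self, mul_zero]
  have h4ne : (4 : R) ≠ 0 := by norm_num
  rcases mul_eq_zero.1 hsum4 with h | h
  · exact absurd h h4ne
  · exact h

end Stmt8

set_option maxHeartbeats 4000000 in
open Stmt8 in
/-- Proposition `prop:rel_unimod`, odd part.
If `χ_0, …, χ_k ∈ ℤ^d` (k ≥ 1) are nonzero and `∑_{i=0}^k c_i χ_i = 0` with
`c_i ∈ {1,−1}`, and `C = {0,…,k}`, then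
`∑_{j ∈ C} ∑_{A ⊔ B = C∖{j}, |B| odd} (−1)^{#{a ∈ A : a < j}} c_B η̄_{A,B} = 0`.
Pairs `(A,B)` are parametrized by `A ⊆ C∖{j}` with `B = (C∖{j}) ∖ A` of odd
cardinality. -/
theorem stmt_8 (d k : ℕ) (hk : 1 ≤ k) (χ : ℕ → Fin d → ℤ) (c : ℕ → ℤ)
    (hne : ∀ i ≤ k, χ i ≠ 0)
    (hc : ∀ i ≤ k, c i = 1 ∨ c i = -1)
    (hsum : ∑ i ∈ Finset.range (k+1), c i • χ i = 0) :
    ∑ j ∈ Finset.range (k+1),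
      ∑ A ∈ ((Finset.range (k+1)).erase j).powerset.filter
          (fun A => Odd ((((Finset.range (k+1)).erase j) \ A).card)),
        (((-1 : ℤ) ^ ((A.filter (fun a => a < j)).card)) *
            ∏ i ∈ ((Finset.range (k+1)).erase j) \ A, c i) •
          oprod d ((Finset.range (k+1)).erase j)
            (fun i => if i ∈ A then wdg d (obarF d (χ i)) else wdg d (psiF d (χ i))) = 0 := by
  classical
  choose g hg using fun i : ℕ => obar_eq (χ i)
  have hgw : ∀ i, wdg d (obarF d (χ i)) = g i • wdg d (psiF d (χ i)) := fun i => by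
    rw [hg i]
    exact map_smul (ExteriorAlgebra.ι (KK d)) _ _
  have hcsq : ∀ i, i ≤ k → (c i : KK d) * (c i : KK d) = 1 := by
    intro i hi
    rcases hc i hi with h | h <;> rw [h] <;> norm_num
  have hpsisum : ∑ i ∈ Finset.range (k+1), c i • psiF d (χ i) = 0 := by
    calc ∑ i ∈ Finset.range (k+1), c i • psiF d (χ i)
        = ∑ i ∈ Finset.range (k+1), psiHom d (c i • χ i) :=
          Finset.sum_congr rfl fun i _ => (map_zsmul (psiHom d) (c i) (χ i)).symm
      _ = psiHom d (∑ i ∈ Finset.range (k+1), c i • χ i) := (map_sum (psiHom d) _ _).symm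
      _ = 0 := by rw [hsum, map_zero]
  have hrel : ∑ i ∈ Finset.range (k+1), (c i : KK d) • wdg d (psiF d (χ i)) = 0 := by
    calc ∑ i ∈ Finset.range (k+1), (c i : KK d) • wdg d (psiF d (χ i))
        = ∑ i ∈ Finset.range (k+1), (ExteriorAlgebra.ι (KK d)) (c i • psiF d (χ i)) := by
          refine Finset.sum_congr rfl fun i _ => ?_
          rw [map_zsmul]
          exact Int.cast_smul_eq_zsmul (KK d) (c i) _
      _ = (ExteriorAlgebra.ι (KK d)) (∑ i ∈ Finset.range (k+1), c i • psiF d (χ i)) :=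
          (map_sum _ _ _).symm
      _ = 0 := by rw [hpsisum, map_zero]
  have hPsi : ∀ j ∈ Finset.range (k+1),
      oprod d ((Finset.range (k+1)).erase j) (fun i => wdg d (psiF d (χ i)))
        = ((-1 : KK d) ^ j * (c 0 : KK d) * (c j : KK d))
            • oprod d ((Finset.range (k+1)).erase 0) (fun i => wdg d (psiF d (χ i))) :=
    fun j hj =>
      Psi_lemma d k (fun i => wdg d (psiF d (χ i))) (fun i => (c i : KK d))
        (fun i j => wdg_anticomm _ _) (fun i => ExteriorAlgebra.ι_sq_zero _)
        (hcsq 0 (by omega)) hrel j (Finset.mem_range.1 hj)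
  rw [Finset.sum_congr rfl (fun j hj => Finset.sum_congr rfl (fun A hA =>
    stepA_lemma d k χ g j A hgw c (Finset.mem_powerset.1 (Finset.mem_filter.1 hA).1)))]
  have stepB : ∀ j ∈ Finset.range (k+1),
      ∑ A ∈ ((Finset.range (k+1)).erase j).powerset.filter
          (fun A => Odd ((((Finset.range (k+1)).erase j) \ A).card)),
        ((((-1 : KK d) ^ ((A.filter (fun a => a < j)).card))
            * ∏ i ∈ ((Finset.range (k+1)).erase j) \ A, (c i : KK d)) * ∏ i ∈ A, g i)
          • oprod d ((Finset.range (k+1)).erase j) (fun i => wdg d (psiF d (χ i)))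
      = ((∑ A ∈ ((Finset.range (k+1)).erase j).powerset.filter
            (fun A => Odd ((((Finset.range (k+1)).erase j) \ A).card)),
            ((((-1 : KK d) ^ ((A.filter (fun a => a < j)).card))
              * ∏ i ∈ ((Finset.range (k+1)).erase j) \ A, (c i : KK d)) * ∏ i ∈ A, g i))
          * ((-1 : KK d) ^ j * (c 0 : KK d) * (c j : KK d)))
          • oprod d ((Finset.range (k+1)).erase 0) (fun i => wdg d (psiF d (χ i))) := by
    intro j hj
    rw [← Finset.sum_smul, hPsi j hj, smul_smul]
  rw [Finset.sum_congr rfl stepB, ← Finset.sum_smul]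
  have kz : ∑ j ∈ Finset.range (k+1),
      (∑ A ∈ ((Finset.range (k+1)).erase j).powerset.filter
          (fun A => Odd ((((Finset.range (k+1)).erase j) \ A).card)),
          ((((-1 : KK d) ^ ((A.filter (fun a => a < j)).card))
            * ∏ i ∈ ((Finset.range (k+1)).erase j) \ A, (c i : KK d)) * ∏ i ∈ A, g i))
        * ((-1 : KK d) ^ j * (c 0 : KK d) * (c j : KK d)) = 0 :=
    key_lemma k g (fun i => (c i : KK d))
  rw [kz, zero_smul]
end
end
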